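/- arXiv:2411.05234 — 9 statements merged into one kernel-verified Lean document; each statement's English description precedes it below -/
import Mathlib

section
/- Suppose the sensitivity assumption and the feature assumption hold, set α = √𝔐/(√A(1−γ)), and let the regularization parameter be λ = 25(ε_θ + α γ √D ε_μ)/(8√κ). Let d_S be a performatively stable solution of the regularized problem, i.e., d_S ∈ argmax_{d ∈ C(d_S)} RR_λ(d; d_S), and write θ_S = 𝔉_θ(d_S). Then d_S is approximately stable with respect to the unregularized objective: d_S^⊤ Φ θ_S ≥ max_{d ∈ C(d_S)} d^⊤ Φ θ_S − 25 𝔐 (ε_θ + α γ √D ε_μ)/(16 √κ (1−γ)²). -/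
open Matrix BigOperators

noncomputable def e2norm {n : Type*} [Fintype n] (x : n → ℝ) : ℝ :=
  Real.sqrt (∑ i, (x i)^2)

noncomputable def specNorm {m n : Type*} [Fintype m] [Fintype n] [DecidableEq n]
    (M : Matrix m n ℝ) : ℝ :=
  ‖LinearMap.toContinuousLinearMap (Matrix.toEuclideanLin M)‖

lemma e2norm_nonneg {n : Type*} [Fintype n] (x : n → ℝ) : 0 ≤ e2norm x :=
  Real.sqrt_nonneg _

lemma e2norm_single {n : Type*} [Fintype n] [DecidableEq n] (i0 : n) :
    e2norm (Pi.single i0 (1:ℝ)) = 1 := by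
  have h : ∑ i, ((Pi.single i0 1 : n → ℝ) i)^2 = 1 := by
    simp [Pi.single_apply, ite_pow, Finset.sum_ite_eq]
  unfold e2norm
  rw [h, Real.sqrt_one]

lemma quad_eq {m n : Type*} [Fintype m] [Fintype n] [DecidableEq n] [DecidableEq m]
    (Φ : Matrix m n ℝ) (v : m → ℝ) :
    v ⬝ᵥ (Φ * Φᵀ).mulVec v = (Φᵀ.mulVec v) ⬝ᵥ (Φᵀ.mulVec v) := by
  rw [← Matrix.mulVec_mulVec, Matrix.dotProduct_mulVec, ← Matrix.mulVec_transpose]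

lemma dot_self_nonneg {n : Type*} [Fintype n] (v : n → ℝ) : 0 ≤ v ⬝ᵥ v :=
  Finset.sum_nonneg fun i _ => mul_self_nonneg _

lemma sum_sq_le_sq_sum {n : Type*} [Fintype n] (f : n → ℝ) (hf : ∀ i, 0 ≤ f i) :
    ∑ i, (f i)^2 ≤ (∑ i, f i)^2 := by
  have h : ∀ i ∈ Finset.univ, (f i)^2 ≤ f i * ∑ j, f j := by
    intro i _
    have h1 := Finset.single_le_sum (f := f) (fun j _ => hf j) (Finset.mem_univ i)
    nlinarith [hf i]
  calc ∑ i, (f i)^2 ≤ ∑ i, f i * ∑ j, f j := Finset.sum_le_sum h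
    _ = (∑ i, f i)^2 := by rw [← Finset.sum_mul]; ring

set_option maxHeartbeats 1600000 in
/-- Theorem 2, approximate stability of the regularized stable
solution with respect to the unregularized objective. -/
theorem stable_solution_approx_stable_unregularized
    (S A D : ℕ) (hS : 0 < S) (hA : 0 < A) (hD : 0 < D)
    (γ : ℝ) (hγ0 : 0 < γ) (hγ1 : γ < 1)
    (ρ : Fin S → ℝ) (hρ0 : ∀ s, 0 ≤ ρ s) (hρ1 : ∑ s, ρ s = 1)
    (Φ : Matrix (Fin S × Fin A) (Fin D) ℝ)
    (hΦrow : ∀ sa, e2norm (Φ sa) ≤ 1)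
    (B : Matrix (Fin S) (Fin S × Fin A) ℝ)
    (hB : ∀ s sa, B s sa = if sa.1 = s then 1 else 0)
    (Fθ : (Fin S × Fin A → ℝ) → (Fin D → ℝ))
    (Fμ : (Fin S × Fin A → ℝ) → Matrix (Fin S) (Fin D) ℝ)
    (hker0 : ∀ d s' sa, 0 ≤ (Fμ d * Φᵀ) s' sa)
    (hker1 : ∀ d sa, ∑ s', (Fμ d * Φᵀ) s' sa = 1)
    (hθbd : ∀ d, e2norm (Fθ d) ≤ Real.sqrt D)
    (hμbd : ∀ d, specNorm (Fμ d) ≤ Real.sqrt D)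
    -- sensitivity assumption
    (εθ εμ : ℝ)
    (hsensθ : ∀ d d', e2norm (Fθ d - Fθ d') ≤ εθ * e2norm (d - d'))
    (hsensμ : ∀ d d', specNorm (Fμ d - Fμ d') ≤ εμ * e2norm (d - d'))
    -- feature assumption
    (𝔐 κ : ℝ) (hκ : 0 < κ)
    (hrank : Φ.rank = D)
    (hmax : ∀ x : Fin D → ℝ, x ⬝ᵥ ((Φᵀ * Φ).mulVec x) ≤ 𝔐 * (e2norm x)^2)
    (hlow : ∀ d d' : Fin S × Fin A → ℝ,
      κ * (e2norm (d - d'))^2 ≤ (d - d') ⬝ᵥ ((Φ * Φᵀ).mulVec (d - d')))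
    -- choice of the regularization parameter
    (α : ℝ) (hα : α = Real.sqrt 𝔐 / (Real.sqrt A * (1 - γ)))
    (lam : ℝ)
    (hlam : lam = 25 * (εθ + α * γ * Real.sqrt D * εμ) / (8 * Real.sqrt κ))
    -- feasible set and regularized objective
    (Cset : (Fin S × Fin A → ℝ) → Set (Fin S × Fin A → ℝ))
    (hCset : ∀ d', Cset d' = {d | (∀ sa, 0 ≤ d sa) ∧
        B.mulVec d = ρ + γ • ((Fμ d' * Φᵀ).mulVec d)})
    (RR : (Fin S × Fin A → ℝ) → (Fin S × Fin A → ℝ) → ℝ)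
    (hRR : ∀ d d', RR d d' =
      d ⬝ᵥ Φ.mulVec (Fθ d') - lam / 2 * (d ⬝ᵥ (Φ * Φᵀ).mulVec d))
    -- performatively stable solution of the regularized problem
    (dS : Fin S × Fin A → ℝ)
    (hdSmem : dS ∈ Cset dS)
    (hdSopt : ∀ d ∈ Cset dS, RR d dS ≤ RR dS dS) :
    ∀ d ∈ Cset dS,
      d ⬝ᵥ Φ.mulVec (Fθ dS)
        - 25 * 𝔐 * (εθ + α * γ * Real.sqrt D * εμ) / (16 * Real.sqrt κ * (1 - γ)^2)
      ≤ dS ⬝ᵥ Φ.mulVec (Fθ dS) := by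
  intro d hd
  have hγne : (0:ℝ) < 1 - γ := by linarith
  have hκs : 0 < Real.sqrt κ := Real.sqrt_pos.mpr hκ
  -- nonnegativity of sensitivity constants
  set i0 : Fin S × Fin A := (⟨0, hS⟩, ⟨0, hA⟩) with hi0
  have hone : e2norm (Pi.single i0 (1:ℝ) - 0) = 1 := by
    rw [sub_zero]; exact e2norm_single i0
  have hεθ : 0 ≤ εθ := by
    have h := hsensθ (Pi.single i0 1) 0
    rw [hone] at h
    have h0 := e2norm_nonneg (Fθ (Pi.single i0 1) - Fθ 0)
    linarith
  have hεμ : 0 ≤ εμ := by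
    have h := hsensμ (Pi.single i0 1) 0
    rw [hone] at h
    have h0 := norm_nonneg (LinearMap.toContinuousLinearMap
      (Matrix.toEuclideanLin (Fμ (Pi.single i0 1) - Fμ 0)))
    have h0' : (0:ℝ) ≤ specNorm (Fμ (Pi.single i0 1) - Fμ 0) := h0
    linarith
  -- 𝔐 ≥ 0
  have h𝔐 : 0 ≤ 𝔐 := by
    set j0 : Fin D := ⟨0, hD⟩
    have h := hmax (Pi.single j0 1)
    have heq : Pi.single j0 (1:ℝ) ⬝ᵥ (Φᵀ * Φ).mulVec (Pi.single j0 1)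
        = (Φ.mulVec (Pi.single j0 1)) ⬝ᵥ (Φ.mulVec (Pi.single j0 1)) := by
      have := quad_eq Φᵀ (Pi.single j0 (1:ℝ))
      simpa using this
    rw [heq, e2norm_single] at h
    have := dot_self_nonneg (Φ.mulVec (Pi.single j0 (1:ℝ)))
    nlinarith
  -- lam ≥ 0
  have hα0 : 0 ≤ α := by
    rw [hα]
    apply div_nonneg (Real.sqrt_nonneg _)
    exact mul_nonneg (Real.sqrt_nonneg _) hγne.le
  have hlam0 : 0 ≤ lam := by
    rw [hlam]
    apply div_nonneg
    · have h1 : 0 ≤ α * γ * Real.sqrt D * εμ :=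
        mul_nonneg (mul_nonneg (mul_nonneg hα0 hγ0.le) (Real.sqrt_nonneg _)) hεμ
      linarith
    · positivity
  -- membership facts
  have hd' := hd
  rw [hCset dS] at hd'
  obtain ⟨hdpos, hdeq⟩ := hd'
  -- sum of d equals 1/(1-γ)
  have hsum : ∑ sa, d sa = 1 / (1 - γ) := by
    have h := congrArg (fun v => ∑ s, v s) hdeq
    have hL : ∑ s, B.mulVec d s = ∑ sa, d sa := by
      simp only [Matrix.mulVec, dotProduct]
      rw [Finset.sum_comm]
      refine Finset.sum_congr rfl fun sa _ => ?_
      rw [← Finset.sum_mul]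
      have : ∑ s, B s sa = 1 := by
        simp [hB]
      rw [this, one_mul]
    have hR : ∑ s, (ρ + γ • ((Fμ dS * Φᵀ).mulVec d)) s = 1 + γ * ∑ sa, d sa := by
      simp only [Pi.add_apply, Pi.smul_apply, smul_eq_mul, Finset.sum_add_distrib, hρ1]
      congr 1
      rw [← Finset.mul_sum]
      congr 1
      simp only [Matrix.mulVec, dotProduct]
      rw [Finset.sum_comm]
      refine Finset.sum_congr rfl fun sa _ => ?_
      rw [← Finset.sum_mul, hker1 dS sa, one_mul]
    rw [hL, hR] at h
    field_simp
    linarith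
  -- quadratic form bound
  set y : Fin D → ℝ := Φᵀ.mulVec d with hy
  have hQ : d ⬝ᵥ (Φ * Φᵀ).mulVec d = y ⬝ᵥ y := quad_eq Φ d
  have hQ0 : 0 ≤ y ⬝ᵥ y := dot_self_nonneg y
  have hself : d ⬝ᵥ Φ.mulVec y = y ⬝ᵥ y := by
    rw [Matrix.dotProduct_mulVec, ← Matrix.mulVec_transpose]
  have hCS : (d ⬝ᵥ Φ.mulVec y)^2 ≤ (∑ sa, (d sa)^2) * (∑ sa, (Φ.mulVec y sa)^2) := by
    have := Finset.sum_mul_sq_le_sq_mul_sq Finset.univ d (Φ.mulVec y)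
    simpa [dotProduct] using this
  have hΦy : ∑ sa, (Φ.mulVec y sa)^2 ≤ 𝔐 * (y ⬝ᵥ y) := by
    have h1 := hmax y
    have h2 : y ⬝ᵥ (Φᵀ * Φ).mulVec y = ∑ sa, (Φ.mulVec y sa)^2 := by
      have := quad_eq Φᵀ y
      simp only [Matrix.transpose_transpose] at this
      rw [this]
      simp [dotProduct, sq]
    have h3 : (e2norm y)^2 = y ⬝ᵥ y := by
      unfold e2norm
      rw [Real.sq_sqrt (Finset.sum_nonneg fun i _ => sq_nonneg _)]
      simp [dotProduct, sq]
    rw [h2, h3] at h1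
    exact h1
  have hdsum2 : ∑ sa, (d sa)^2 ≤ (1/(1-γ))^2 := by
    calc ∑ sa, (d sa)^2 ≤ (∑ sa, d sa)^2 := sum_sq_le_sq_sum d hdpos
      _ = (1/(1-γ))^2 := by rw [hsum]
  have hdsq0 : 0 ≤ ∑ sa, (d sa)^2 := Finset.sum_nonneg fun i _ => sq_nonneg _
  have hQle : y ⬝ᵥ y ≤ 𝔐 / (1-γ)^2 := by
    rcases eq_or_lt_of_le hQ0 with h0 | h0
    · rw [← h0]
      positivity
    · have s1 : (y ⬝ᵥ y)^2 ≤ (∑ sa, (d sa)^2) * (𝔐 * (y ⬝ᵥ y)) := by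
        have t := le_trans hCS (mul_le_mul_of_nonneg_left hΦy hdsq0)
        rwa [hself] at t
      have s2 : (∑ sa, (d sa)^2) * (𝔐 * (y ⬝ᵥ y)) ≤ (1/(1-γ))^2 * (𝔐 * (y ⬝ᵥ y)) :=
        mul_le_mul_of_nonneg_right hdsum2 (mul_nonneg h𝔐 hQ0)
      have heq2 : (1/(1-γ))^2 * (𝔐 * (y ⬝ᵥ y)) = (𝔐 / (1-γ)^2) * (y ⬝ᵥ y) := by
        field_simp
      have s3 : (y ⬝ᵥ y) * (y ⬝ᵥ y) ≤ (𝔐 / (1-γ)^2) * (y ⬝ᵥ y) := by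
        nlinarith [s1, s2]
      exact le_of_mul_le_mul_right s3 h0
  -- nonnegativity of dS quadratic form
  have hQS0 : 0 ≤ dS ⬝ᵥ (Φ * Φᵀ).mulVec dS := by
    rw [quad_eq Φ dS]; exact dot_self_nonneg _
  -- optimality
  have hopt := hdSopt d hd
  rw [hRR, hRR] at hopt
  have hbnd : 25 * 𝔐 * (εθ + α * γ * Real.sqrt D * εμ) / (16 * Real.sqrt κ * (1 - γ)^2)
      = lam / 2 * (𝔐 / (1-γ)^2) := by
    rw [hlam]
    field_simp
    ring
  have hle1 : lam / 2 * (d ⬝ᵥ (Φ * Φᵀ).mulVec d) ≤ lam / 2 * (𝔐 / (1-γ)^2) := by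
    apply mul_le_mul_of_nonneg_left _ (by linarith)
    rw [hQ]; exact hQle
  have hle2 : 0 ≤ lam / 2 * (dS ⬝ᵥ (Φ * Φᵀ).mulVec dS) :=
    mul_nonneg (by linarith) hQS0
  rw [hbnd]
  linarith
end

section
/- Let X, Y, G, W be nonempty sets and let L, L̂ : X × Y × G × W → ℝ. Suppose: (i) (x*, y*, g*, ω*) is a saddle point of L, i.e., (g*, ω*) minimizes (g, ω) ↦ L(x*, y*, g, ω) over G × W, and (x*, y*) maximizes (x, y) ↦ min_{g,ω} L(x, y, g, ω); (ii) for every (x, y) there exists a joint minimizer (ĝ(x,y), ω̂(x,y)) of (g, ω) ↦ L̂(x, y, g, ω), the pair (x̂, ŷ) maximizes (x, y) ↦ L̂(x, y, ĝ(x,y), ω̂(x,y)), and (ĝ, ω̂) = (ĝ(x̂,ŷ), ω̂(x̂,ŷ)); (iii) there exists g̃ minimizing g ↦ L(x̂, ŷ, g, ω*); (iv) for every x, y, ω and every g' that minimizes g ↦ L̂(x, y, g, ω) or minimizes g ↦ L(x, y, g, ω), one has |L(x, y, g', ω) − L̂(x, y, g', ω)| ≤ ε. Then L(x*, y*, g*,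 ω*) − L(x̂, ŷ, g*, ω*) ≤ 2ε. -/
/-- Lemma: a saddle point of an approximate Lagrangian is an
approximate saddle point of the true Lagrangian. -/
theorem approx_saddle_point
    {X Y G W : Type*} [Nonempty X] [Nonempty Y] [Nonempty G] [Nonempty W]
    (L Lhat : X → Y → G → W → ℝ) (ε : ℝ)
    -- (i) (x*, y*, g*, ω*) is a saddle point of L
    (xs : X) (ys : Y) (gs : G) (ωs : W)
    (hmin_star : ∀ g ω, L xs ys gs ωs ≤ L xs ys g ω)
    (hmax_star : ∀ (x : X) (y : Y) (g : G) (ω : W),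
      (∀ g' ω', L x y g ω ≤ L x y g' ω') → L x y g ω ≤ L xs ys gs ωs)
    -- (ii) (x̂, ŷ, ĝ, ω̂) is a saddle point of L̂, with joint minimizers (ĝ(x,y), ω̂(x,y))
    (ghat : X → Y → G) (ωhat : X → Y → W)
    (hhatmin : ∀ x y g ω, Lhat x y (ghat x y) (ωhat x y) ≤ Lhat x y g ω)
    (xh : X) (yh : Y)
    (hhatmax : ∀ x y, Lhat x y (ghat x y) (ωhat x y) ≤ Lhat xh yh (ghat xh yh) (ωhat xh yh))
    (gh : G) (ωh : W) (hgh : gh = ghat xh yh) (hωh : ωh = ωhat xh yh)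
    -- (iii) there is a minimizer g̃ of g ↦ L(x̂, ŷ, g, ω*)
    (gt : G) (hgt : ∀ g, L xh yh gt ωs ≤ L xh yh g ωs)
    -- (iv) L and L̂ are ε-close at minimizers in g of either objective
    (happrox : ∀ (x : X) (y : Y) (ω : W) (g' : G),
      ((∀ g, Lhat x y g' ω ≤ Lhat x y g ω) ∨ (∀ g, L x y g' ω ≤ L x y g ω)) →
      |L x y g' ω - Lhat x y g' ω| ≤ ε) :
    L xs ys gs ωs - L xh yh gs ωs ≤ 2 * ε := by
  have h1 : L xh yh gt ωs ≤ L xh yh gs ωs := hgt gs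
  have h2 := happrox xh yh ωs gt (Or.inr hgt)
  have h3 := happrox xs ys (ωhat xs ys) (ghat xs ys)
      (Or.inl (fun g => hhatmin xs ys g (ωhat xs ys)))
  have h4 := hhatmax xs ys
  have h5 := hhatmin xh yh gt ωs
  have h6 := hmin_star (ghat xs ys) (ωhat xs ys)
  rw [abs_le] at h2 h3
  linarith [h2.1, h2.2, h3.1, h3.2]
end

section
/- Let 𝒮 and 𝒜 be finite sets, γ ∈ (0,1), ρ a probability distribution on 𝒮, π a policy (π(·|s) ∈ Δ(𝒜) for each s), and let P, P̃ : 𝒮 × 𝒜 → Δ(𝒮) be transition kernels with Σ_{s'} |P(s'|s,a) − P̃(s'|s,a)| ≤ β for every (s,a). Define state distributions P^π_0 = ρ and P^π_h(s') = Σ_{s,a} P^π_{h−1}(s) π(a|s) P(s'|s,a) for h ≥ 1 (and P̃^π_h analogously with P̃), and discounted occupancy measures d^π(s,a) = Σ_{h=0}^∞ γ^h P^π_h(s) π(a|s) and d̃^π(s,a) = Σ_{h=0}^∞ γ^h P̃^π_h(s) π(a|s). Then Σ_{s,a} |d^π(s,a) − d̃^π(s,a)| ≤ β γ/(1−γ)².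 -/
/-!
The `h`-step state distributions under `P` and `P̃` differ by at most `h β` in `ℓ¹`: one step
maps `μ, ν` to `μ P - ν P̃ = (μ - ν) P + ν (P - P̃)`, the first term is no larger than
`‖μ - ν‖₁` because `P` is stochastic and the second is at most `β`. Summing
`γ^h · h β` over `h` gives `β γ / (1 - γ)²`; the policy factor `π(a|s)` of the occupancy
measures drops out of the sum over `a`.
-/

open Finset

/-- The state distribution at step `h` obtained by following policy `π` under
transition kernel `P` starting from distribution `ρ`. -/
noncomputable def stateDist {S A : Type*} [Fintype S] [Fintype A]
    (ρ : S → ℝ) (π : S → A → ℝ) (P : S → A → S → ℝ) : ℕ → S → ℝ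
  | 0 => ρ
  | (h+1) => fun s' => ∑ s, ∑ a, stateDist ρ π P h s * π s a * P s a s'

section StateDistributions

variable {S A : Type*} [Fintype S] [Fintype A]

noncomputable def stepDist (π : S → A → ℝ) (P : S → A → S → ℝ) (μ : S → ℝ) (s' : S) : ℝ :=
  ∑ s, ∑ a, μ s * π s a * P s a s'

theorem stateDist_succ (ρ : S → ℝ) (π : S → A → ℝ) (P : S → A → S → ℝ) (h : ℕ) :
    stateDist ρ π P (h + 1) = stepDist π P (stateDist ρ π P h) :=
  rfl

theorem stepDist_mem_stdSimplex {π : S → A → ℝ} {P : S → A → S → ℝ} {μ : S → ℝ}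
    (hπ : ∀ s, π s ∈ stdSimplex ℝ A) (hP : ∀ s a, P s a ∈ stdSimplex ℝ S)
    (hμ : μ ∈ stdSimplex ℝ S) : stepDist π P μ ∈ stdSimplex ℝ S := by
  refine ⟨fun s' => sum_nonneg fun s _ => sum_nonneg fun a _ =>
    mul_nonneg (mul_nonneg (hμ.1 s) ((hπ s).1 a)) ((hP s a).1 s'), ?_⟩
  calc ∑ s', stepDist π P μ s' = ∑ s, ∑ a, μ s * π s a * ∑ s', P s a s' := by
        simp_rw [stepDist, mul_sum]
        rw [sum_comm]
        exact sum_congr rfl fun _ _ => sum_comm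
    _ = 1 := by simp_rw [(hP _ _).2, mul_one, ← mul_sum, (hπ _).2, mul_one, hμ.2]

theorem stateDist_mem_stdSimplex {ρ : S → ℝ} {π : S → A → ℝ} {P : S → A → S → ℝ}
    (hρ : ρ ∈ stdSimplex ℝ S) (hπ : ∀ s, π s ∈ stdSimplex ℝ A)
    (hP : ∀ s a, P s a ∈ stdSimplex ℝ S) (h : ℕ) : stateDist ρ π P h ∈ stdSimplex ℝ S := by
  induction h with
  | zero => exact hρ
  | succ n ih => exact stepDist_mem_stdSimplex hπ hP ih

theorem stepDist_sub_stepDist (π : S → A → ℝ) (P P' : S → A → S → ℝ) (μ ν : S → ℝ) :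
    stepDist π P μ - stepDist π P' ν = stepDist π P (μ - ν) + stepDist π (P - P') ν := by
  ext s'
  simp only [stepDist, Pi.sub_apply, Pi.add_apply, ← sum_sub_distrib, ← sum_add_distrib]
  exact sum_congr rfl fun s _ => sum_congr rfl fun a _ => by ring

theorem sum_abs_stepDist_le {π : S → A → ℝ} {Q : S → A → S → ℝ} {β : ℝ}
    (hπ : ∀ s, π s ∈ stdSimplex ℝ A) (hQ : ∀ s a, ∑ s', |Q s a s'| ≤ β) (μ : S → ℝ) :
    ∑ s', |stepDist π Q μ s'| ≤ β * ∑ s, |μ s| := by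
  calc ∑ s', |stepDist π Q μ s'|
      ≤ ∑ s', ∑ s, ∑ a, |μ s| * π s a * |Q s a s'| := by
        refine sum_le_sum fun s' _ => (abs_sum_le_sum_abs _ _).trans <| sum_le_sum fun s _ =>
          (abs_sum_le_sum_abs _ _).trans <| sum_le_sum fun a _ => ?_
        rw [abs_mul, abs_mul, abs_of_nonneg ((hπ s).1 a)]
    _ = ∑ s, |μ s| * ∑ a, π s a * ∑ s', |Q s a s'| := by
        simp_rw [mul_sum, ← mul_assoc]
        rw [sum_comm]
        exact sum_congr rfl fun _ _ => sum_comm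
    _ ≤ ∑ s, |μ s| * ∑ a, π s a * β := by
        gcongr with s _ a
        · exact (hπ s).1 a
        · exact hQ s a
    _ = β * ∑ s, |μ s| := by
        simp_rw [← sum_mul, (hπ _).2, one_mul, mul_sum, mul_comm]

theorem sum_abs_stateDist_sub_le {ρ : S → ℝ} {π : S → A → ℝ} {P P' : S → A → S → ℝ} {β : ℝ}
    (hρ : ρ ∈ stdSimplex ℝ S) (hπ : ∀ s, π s ∈ stdSimplex ℝ A)
    (hP : ∀ s a, P s a ∈ stdSimplex ℝ S) (hP' : ∀ s a, P' s a ∈ stdSimplex ℝ S)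
    (hclose : ∀ s a, ∑ s', |P s a s' - P' s a s'| ≤ β) (h : ℕ) :
    ∑ s, |stateDist ρ π P h s - stateDist ρ π P' h s| ≤ h * β := by
  induction h with
  | zero => simp [stateDist]
  | succ n ih =>
    set μ := stateDist ρ π P n
    set ν := stateDist ρ π P' n
    have hν := stateDist_mem_stdSimplex hρ hπ hP' n
    have hPabs : ∀ s a, ∑ s', |P s a s'| ≤ 1 := fun s a => by
      simp_rw [abs_of_nonneg ((hP s a).1 _), (hP s a).2, le_refl]
    calc ∑ s', |stateDist ρ π P (n + 1) s' - stateDist ρ π P' (n + 1) s'|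
        = ∑ s', |stepDist π P (μ - ν) s' + stepDist π (P - P') ν s'| :=
          sum_congr rfl fun s' _ => by
            rw [← Pi.add_apply, ← stepDist_sub_stepDist, Pi.sub_apply, stateDist_succ,
              stateDist_succ]
      _ ≤ ∑ s', |stepDist π P (μ - ν) s'| + ∑ s', |stepDist π (P - P') ν s'| := by
          rw [← sum_add_distrib]
          exact sum_le_sum fun s' _ => abs_add_le _ _
      _ ≤ 1 * ∑ s, |μ s - ν s| + β * ∑ s, |ν s| :=
          add_le_add (sum_abs_stepDist_le hπ hPabs _) (sum_abs_stepDist_le hπ hclose _)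
      _ ≤ (n + 1 : ℕ) * β := by
          rw [one_mul, sum_congr rfl fun s _ => abs_of_nonneg (hν.1 s), hν.2]
          push_cast
          linarith

end StateDistributions

theorem summable_geometric_mul_of_mem_stdSimplex {S : Type*} [Fintype S] {γ : ℝ}
    (hγ0 : 0 ≤ γ) (hγ1 : γ < 1) {μ : ℕ → S → ℝ} (hμ : ∀ h, μ h ∈ stdSimplex ℝ S) (s : S) :
    Summable fun h => γ ^ h * μ h s :=
  (summable_geometric_of_lt_one hγ0 hγ1).of_nonneg_of_le
    (fun h => mul_nonneg (pow_nonneg hγ0 h) ((hμ h).1 s))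
    fun h => mul_le_of_le_one_right (pow_nonneg hγ0 h) (mem_Icc_of_mem_stdSimplex (hμ h) s).2

theorem sum_abs_tsum_geometric_mul_le {S : Type*} [Fintype S] {γ β : ℝ}
    (hγ0 : 0 ≤ γ) (hγ1 : γ < 1) (e : ℕ → S → ℝ) (he : ∀ h, ∑ s, |e h s| ≤ h * β) :
    ∑ s, |∑' h, γ ^ h * e h s| ≤ β * γ / (1 - γ) ^ 2 := by
  have hmoment : HasSum (fun h : ℕ => β * (h * γ ^ h)) (β * (γ / (1 - γ) ^ 2)) :=
    (hasSum_coe_mul_geometric_of_norm_lt_one (by rwa [Real.norm_of_nonneg hγ0])).mul_left β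
  have habs : ∀ s, Summable fun h => γ ^ h * |e h s| := fun s =>
    hmoment.summable.of_nonneg_of_le (fun h => by positivity) fun h =>
      calc γ ^ h * |e h s| ≤ γ ^ h * (h * β) := by
            gcongr
            exact (single_le_sum (fun s _ => abs_nonneg (e h s)) (mem_univ s)).trans (he h)
        _ = β * (h * γ ^ h) := by ring
  calc ∑ s, |∑' h, γ ^ h * e h s|
      ≤ ∑ s, ∑' h, γ ^ h * |e h s| := sum_le_sum fun s _ => by
        simpa only [Real.norm_eq_abs] using tsum_of_norm_bounded (f := fun h => γ ^ h * e h s)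
          (habs s).hasSum fun h => by rw [Real.norm_eq_abs, abs_mul, abs_pow, abs_of_nonneg hγ0]
    _ = ∑' h, γ ^ h * ∑ s, |e h s| := by
        rw [← Summable.tsum_finsetSum fun s _ => habs s]
        simp_rw [mul_sum]
    _ ≤ ∑' h : ℕ, β * (h * γ ^ h) := by
        refine Summable.tsum_le_tsum (fun h => ?_) ?_ hmoment.summable
        · nlinarith [he h, pow_nonneg hγ0 h]
        · simp_rw [mul_sum]
          exact summable_sum fun s _ => habs s
    _ = β * γ / (1 - γ) ^ 2 := by rw [hmoment.tsum_eq]; ring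

theorem occupancy_measure_perturbation_general
    {S A : Type*} [Fintype S] [Fintype A]
    (γ : ℝ) (hγ0 : 0 < γ) (hγ1 : γ < 1)
    (ρ : S → ℝ) (hρ0 : ∀ s, 0 ≤ ρ s) (hρ1 : ∑ s, ρ s = 1)
    (π : S → A → ℝ) (hπ0 : ∀ s a, 0 ≤ π s a) (hπ1 : ∀ s, ∑ a, π s a = 1)
    (P Pt : S → A → S → ℝ)
    (hP0 : ∀ s a s', 0 ≤ P s a s') (hP1 : ∀ s a, ∑ s', P s a s' = 1)
    (hPt0 : ∀ s a s', 0 ≤ Pt s a s') (hPt1 : ∀ s a, ∑ s', Pt s a s' = 1)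
    (β : ℝ)
    (hclose : ∀ s a, ∑ s', |P s a s' - Pt s a s'| ≤ β)
    (dπ dπt : S → A → ℝ)
    (hdπ : ∀ s a, dπ s a = ∑' h : ℕ, γ^h * stateDist ρ π P h s * π s a)
    (hdπt : ∀ s a, dπt s a = ∑' h : ℕ, γ^h * stateDist ρ π Pt h s * π s a) :
    ∑ s, ∑ a, |dπ s a - dπt s a| ≤ β * γ / (1 - γ)^2 := by
  have hρ : ρ ∈ stdSimplex ℝ S := ⟨hρ0, hρ1⟩
  have hπ : ∀ s, π s ∈ stdSimplex ℝ A := fun s => ⟨hπ0 s, hπ1 s⟩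
  have hP : ∀ s a, P s a ∈ stdSimplex ℝ S := fun s a => ⟨hP0 s a, hP1 s a⟩
  have hPt : ∀ s a, Pt s a ∈ stdSimplex ℝ S := fun s a => ⟨hPt0 s a, hPt1 s a⟩
  have hdiff : ∀ s a, dπ s a - dπt s a =
      (∑' h, γ ^ h * (stateDist ρ π P h s - stateDist ρ π Pt h s)) * π s a := fun s a => by
    simp_rw [hdπ, hdπt, tsum_mul_right, ← sub_mul, mul_sub]
    rw [Summable.tsum_sub
      (summable_geometric_mul_of_mem_stdSimplex hγ0.le hγ1 (stateDist_mem_stdSimplex hρ hπ hP) s)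
      (summable_geometric_mul_of_mem_stdSimplex hγ0.le hγ1 (stateDist_mem_stdSimplex hρ hπ hPt) s)]
  calc ∑ s, ∑ a, |dπ s a - dπt s a|
      = ∑ s, |∑' h, γ ^ h * (stateDist ρ π P h s - stateDist ρ π Pt h s)| := by
        simp_rw [hdiff, abs_mul, ← mul_sum, abs_of_nonneg (hπ0 _ _), hπ1, mul_one]
    _ ≤ β * γ / (1 - γ) ^ 2 := sum_abs_tsum_geometric_mul_le hγ0.le hγ1 _
        (sum_abs_stateDist_sub_le hρ hπ hP hPt hclose)

/-- Lemma: occupancy measures of nearby transition kernels are close. -/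
theorem occupancy_measure_perturbation
    {S A : Type*} [Fintype S] [Fintype A] [Nonempty S] [Nonempty A]
    (γ : ℝ) (hγ0 : 0 < γ) (hγ1 : γ < 1)
    (ρ : S → ℝ) (hρ0 : ∀ s, 0 ≤ ρ s) (hρ1 : ∑ s, ρ s = 1)
    (π : S → A → ℝ) (hπ0 : ∀ s a, 0 ≤ π s a) (hπ1 : ∀ s, ∑ a, π s a = 1)
    (P Pt : S → A → S → ℝ)
    (hP0 : ∀ s a s', 0 ≤ P s a s') (hP1 : ∀ s a, ∑ s', P s a s' = 1)
    (hPt0 : ∀ s a s', 0 ≤ Pt s a s') (hPt1 : ∀ s a, ∑ s', Pt s a s' = 1)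
    (β : ℝ)
    (hclose : ∀ s a, ∑ s', |P s a s' - Pt s a s'| ≤ β)
    (dπ dπt : S → A → ℝ)
    (hdπ : ∀ s a, dπ s a = ∑' h : ℕ, γ^h * stateDist ρ π P h s * π s a)
    (hdπt : ∀ s a, dπt s a = ∑' h : ℕ, γ^h * stateDist ρ π Pt h s * π s a) :
    ∑ s, ∑ a, |dπ s a - dπt s a| ≤ β * γ / (1 - γ)^2 :=
  occupancy_measure_perturbation_general γ hγ0 hγ1 ρ hρ0 hρ1 π hπ0 hπ1 P Pt hP0 hP1 hPt0 hPt1 β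
    hclose dπ dπt hdπ hdπt
end

section
/- Let 𝒮 and 𝒜 be finite sets and γ ∈ (0,1). Let (r₁, P₁) and (r₂, P₂) be two Markov decision processes on 𝒮 × 𝒜 with rewards bounded by |r_i(s,a)| ≤ R, reward gap |r₁(s,a) − r₂(s,a)| ≤ ε_r for all (s,a), and transition gap Σ_{s'} |P₁(s'|s,a) − P₂(s'|s,a)| ≤ ε_P for all (s,a). Let Q₁*, Q₂* : 𝒮 × 𝒜 → ℝ be the optimal state–action value functions, i.e., the (unique bounded) solutions of the Bellman optimality equations Q_i*(s,a) = r_i(s,a) + γ Σ_{s'} P_i(s'|s,a) max_b Q_i*(s',b). Then for every (s,a): |Q₁*(s,a) − Q₂*(s,a)| ≤ ε_r/(1−γ) + R·γ·ε_P/(1−γ)². -/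
open BigOperators

/-! With `‖·‖` the sup norm on `S → A → ℝ`, the Bellman equation gives
`‖Q₂‖ ≤ R + γ‖Q₂‖`, so `‖Q₂‖ ≤ R / (1 - γ)`. Subtracting the two Bellman equations,
`Q₁ - Q₂` is the reward gap plus `γ` times `P₁ (V₁ - V₂) + (P₁ - P₂) V₂`, where `Vᵢ s = maxₐ Qᵢ s a`;
since the maximum is 1-Lipschitz in the sup norm, `‖Q₁ - Q₂‖ ≤ εr + γ (‖Q₁ - Q₂‖ + εP ‖Q₂‖)`,
and the bound follows by solving for `‖Q₁ - Q₂‖`. -/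

theorem ciSup_le_ciSup_add_norm_sub {ι : Type*} [Fintype ι] [Nonempty ι] (f g : ι → ℝ) :
    ⨆ i, f i ≤ (⨆ i, g i) + ‖f - g‖ :=
  ciSup_le fun i => calc
    f i ≤ g i + ‖f - g‖ := by
      have hi : |f i - g i| ≤ ‖f - g‖ := norm_le_pi_norm (f - g) i
      linarith [le_abs_self (f i - g i)]
    _ ≤ (⨆ i, g i) + ‖f - g‖ := by gcongr; exact le_ciSup (Finite.bddAbove_range g) i

theorem abs_ciSup_sub_ciSup_le_norm_sub {ι : Type*} [Fintype ι] [Nonempty ι] (f g : ι → ℝ) :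
    |(⨆ i, f i) - ⨆ i, g i| ≤ ‖f - g‖ := by
  have := ciSup_le_ciSup_add_norm_sub f g
  have := ciSup_le_ciSup_add_norm_sub g f
  rw [norm_sub_rev] at this
  exact abs_sub_le_iff.2 ⟨by linarith, by linarith⟩

theorem abs_sum_mul_le_sum_abs_mul_norm {ι : Type*} [Fintype ι] (p v : ι → ℝ) :
    |∑ i, p i * v i| ≤ (∑ i, |p i|) * ‖v‖ :=
  calc |∑ i, p i * v i| ≤ ∑ i, |p i| * |v i| := by
        simpa only [abs_mul] using Finset.abs_sum_le_sum_abs (fun i => p i * v i) Finset.univ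
    _ ≤ ∑ i, |p i| * ‖v‖ := by
        gcongr with i; exact norm_le_pi_norm v i
    _ = (∑ i, |p i|) * ‖v‖ := (Finset.sum_mul ..).symm

theorem abs_sum_mul_le_norm_of_stochastic {ι : Type*} [Fintype ι] {p : ι → ℝ}
    (hp0 : ∀ i, 0 ≤ p i) (hp1 : ∑ i, p i = 1) (v : ι → ℝ) : |∑ i, p i * v i| ≤ ‖v‖ := by
  simpa [abs_of_nonneg (hp0 _), hp1] using abs_sum_mul_le_sum_abs_mul_norm p v

section
variable {S A : Type*} [Fintype S] [Fintype A]

theorem abs_apply_le_norm (f : S → A → ℝ) (s : S) (a : A) : |f s a| ≤ ‖f‖ :=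
  (norm_le_pi_norm (f s) a).trans (norm_le_pi_norm f s)

theorem norm_le_of_forall_abs_le [Nonempty S] [Nonempty A] {f : S → A → ℝ} {C : ℝ}
    (h : ∀ s a, |f s a| ≤ C) : ‖f‖ ≤ C :=
  have hC : 0 ≤ C := (abs_nonneg _).trans (h (Classical.arbitrary S) (Classical.arbitrary A))
  (pi_norm_le_iff_of_nonneg hC).2 fun s => (pi_norm_le_iff_of_nonneg hC).2 (h s)

theorem norm_ciSup_sub_ciSup_le [Nonempty A] (Q₁ Q₂ : S → A → ℝ) :
    ‖fun s => (⨆ b, Q₁ s b) - ⨆ b, Q₂ s b‖ ≤ ‖Q₁ - Q₂‖ :=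
  (pi_norm_le_iff_of_nonneg (norm_nonneg _)).2 fun s =>
    (abs_ciSup_sub_ciSup_le_norm_sub (Q₁ s) (Q₂ s)).trans (norm_le_pi_norm (Q₁ - Q₂) s)

theorem norm_ciSup_le [Nonempty A] (Q : S → A → ℝ) : ‖fun s => ⨆ b, Q s b‖ ≤ ‖Q‖ := by
  simpa using norm_ciSup_sub_ciSup_le Q 0

variable {γ : ℝ} {r Q : S → A → ℝ} {P : S → A → S → ℝ}

theorem one_sub_mul_norm_le_of_bellman [Nonempty S] [Nonempty A] (hγ : 0 ≤ γ)
    (hP0 : ∀ s a s', 0 ≤ P s a s') (hP1 : ∀ s a, ∑ s', P s a s' = 1)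
    (hQ : ∀ s a, Q s a = r s a + γ * ∑ s', P s a s' * (⨆ b, Q s' b)) :
    (1 - γ) * ‖Q‖ ≤ ‖r‖ := by
  suffices ‖Q‖ ≤ ‖r‖ + γ * ‖Q‖ by linarith
  refine norm_le_of_forall_abs_le fun s a => ?_
  calc |Q s a| ≤ |r s a| + γ * |∑ s', P s a s' * ⨆ b, Q s' b| := by
        rw [hQ, ← abs_of_nonneg hγ, ← abs_mul, abs_of_nonneg hγ]
        exact abs_add_le _ _
    _ ≤ ‖r‖ + γ * ‖Q‖ := by
        gcongr
        · exact abs_apply_le_norm r s a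
        · exact (abs_sum_mul_le_norm_of_stochastic (hP0 s a) (hP1 s a) _).trans
            (norm_ciSup_le Q)

theorem one_sub_mul_norm_sub_le_of_bellman [Nonempty S] [Nonempty A] {εP : ℝ}
    {r₁ r₂ Q₁ Q₂ : S → A → ℝ} {P₁ P₂ : S → A → S → ℝ} (hγ : 0 ≤ γ)
    (hP₁0 : ∀ s a s', 0 ≤ P₁ s a s') (hP₁1 : ∀ s a, ∑ s', P₁ s a s' = 1)
    (hP : ∀ s a, ∑ s', |P₁ s a s' - P₂ s a s'| ≤ εP)
    (hQ₁ : ∀ s a, Q₁ s a = r₁ s a + γ * ∑ s', P₁ s a s' * (⨆ b, Q₁ s' b))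
    (hQ₂ : ∀ s a, Q₂ s a = r₂ s a + γ * ∑ s', P₂ s a s' * (⨆ b, Q₂ s' b)) :
    (1 - γ) * ‖Q₁ - Q₂‖ ≤ ‖r₁ - r₂‖ + γ * (εP * ‖Q₂‖) := by
  suffices ‖Q₁ - Q₂‖ ≤ ‖r₁ - r₂‖ + γ * (‖Q₁ - Q₂‖ + εP * ‖Q₂‖) by linarith
  refine norm_le_of_forall_abs_le fun s a => ?_
  have hsplit : Q₁ s a - Q₂ s a = (r₁ s a - r₂ s a) + γ *
      (∑ s', P₁ s a s' * ((⨆ b, Q₁ s' b) - ⨆ b, Q₂ s' b) +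
        ∑ s', (P₁ s a s' - P₂ s a s') * ⨆ b, Q₂ s' b) := by
    have hterm : ∀ s', P₁ s a s' * ((⨆ b, Q₁ s' b) - ⨆ b, Q₂ s' b) +
        (P₁ s a s' - P₂ s a s') * (⨆ b, Q₂ s' b) =
        P₁ s a s' * (⨆ b, Q₁ s' b) - P₂ s a s' * ⨆ b, Q₂ s' b := fun s' => by ring
    rw [hQ₁, hQ₂, ← Finset.sum_add_distrib]
    simp only [hterm, Finset.sum_sub_distrib]
    ring
  have hcontract : |∑ s', P₁ s a s' * ((⨆ b, Q₁ s' b) - ⨆ b, Q₂ s' b)| ≤ ‖Q₁ - Q₂‖ :=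
    (abs_sum_mul_le_norm_of_stochastic (hP₁0 s a) (hP₁1 s a) _).trans
      (norm_ciSup_sub_ciSup_le Q₁ Q₂)
  have hmodel : |∑ s', (P₁ s a s' - P₂ s a s') * ⨆ b, Q₂ s' b| ≤ εP * ‖Q₂‖ :=
    calc _ ≤ (∑ s', |P₁ s a s' - P₂ s a s'|) * ‖fun s' => ⨆ b, Q₂ s' b‖ :=
          abs_sum_mul_le_sum_abs_mul_norm _ _
      _ ≤ εP * ‖Q₂‖ := mul_le_mul (hP s a) (norm_ciSup_le Q₂) (norm_nonneg _)
          ((Finset.sum_nonneg fun _ _ => abs_nonneg _).trans (hP s a))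
  calc |Q₁ s a - Q₂ s a|
        ≤ |r₁ s a - r₂ s a| + γ * (|∑ s', P₁ s a s' * ((⨆ b, Q₁ s' b) - ⨆ b, Q₂ s' b)| +
          |∑ s', (P₁ s a s' - P₂ s a s') * ⨆ b, Q₂ s' b|) := by
        rw [hsplit]
        refine (abs_add_le _ _).trans ?_
        rw [abs_mul, abs_of_nonneg hγ]
        gcongr
        exact abs_add_le _ _
    _ ≤ ‖r₁ - r₂‖ + γ * (‖Q₁ - Q₂‖ + εP * ‖Q₂‖) := by
        gcongr
        exact abs_apply_le_norm (r₁ - r₂) s a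

end

theorem optimal_Q_perturbation_general
    {S A : Type*} [Fintype S] [Fintype A]
    (γ : ℝ) (hγ0 : 0 < γ) (hγ1 : γ < 1)
    (r₁ r₂ : S → A → ℝ) (P₁ P₂ : S → A → S → ℝ)
    (R εr εP : ℝ)
    (hP₁0 : ∀ s a s', 0 ≤ P₁ s a s') (hP₁1 : ∀ s a, ∑ s', P₁ s a s' = 1)
    (hP₂0 : ∀ s a s', 0 ≤ P₂ s a s') (hP₂1 : ∀ s a, ∑ s', P₂ s a s' = 1)
    (hR₂ : ∀ s a, |r₂ s a| ≤ R)
    (hr : ∀ s a, |r₁ s a - r₂ s a| ≤ εr)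
    (hP : ∀ s a, ∑ s', |P₁ s a s' - P₂ s a s'| ≤ εP)
    (Q₁ Q₂ : S → A → ℝ)
    (hQ₁ : ∀ s a, Q₁ s a = r₁ s a + γ * ∑ s', P₁ s a s' * (⨆ b, Q₁ s' b))
    (hQ₂ : ∀ s a, Q₂ s a = r₂ s a + γ * ∑ s', P₂ s a s' * (⨆ b, Q₂ s' b)) :
    ∀ s a, |Q₁ s a - Q₂ s a| ≤ εr / (1 - γ) + R * γ * εP / (1 - γ)^2 := by
  intro s a
  have : Nonempty S := ⟨s⟩
  have : Nonempty A := ⟨a⟩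
  have h1γ : 0 < 1 - γ := sub_pos.2 hγ1
  have hεP : 0 ≤ εP := (Finset.sum_nonneg fun _ _ => abs_nonneg _).trans (hP s a)
  have hQ₂R : ‖Q₂‖ ≤ R / (1 - γ) := by
    rw [le_div_iff₀ h1γ, mul_comm]
    exact (one_sub_mul_norm_le_of_bellman hγ0.le hP₂0 hP₂1 hQ₂).trans
      (norm_le_of_forall_abs_le hR₂)
  have hgap := one_sub_mul_norm_sub_le_of_bellman hγ0.le hP₁0 hP₁1 hP hQ₁ hQ₂
  have hr' : ‖r₁ - r₂‖ ≤ εr := norm_le_of_forall_abs_le hr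
  calc |Q₁ s a - Q₂ s a| ≤ ‖Q₁ - Q₂‖ := abs_apply_le_norm (Q₁ - Q₂) s a
    _ ≤ (εr + γ * (εP * ‖Q₂‖)) / (1 - γ) := by rw [le_div_iff₀ h1γ]; linarith
    _ ≤ (εr + γ * (εP * (R / (1 - γ)))) / (1 - γ) := by gcongr
    _ = εr / (1 - γ) + R * γ * εP / (1 - γ)^2 := by field_simp

/-- simulation lemma for optimal Q-functions of two nearby MDPs. -/
theorem optimal_Q_perturbation
    {S A : Type*} [Fintype S] [Fintype A] [Nonempty S] [Nonempty A]
    (γ : ℝ) (hγ0 : 0 < γ) (hγ1 : γ < 1)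
    (r₁ r₂ : S → A → ℝ) (P₁ P₂ : S → A → S → ℝ)
    (R εr εP : ℝ)
    (hP₁0 : ∀ s a s', 0 ≤ P₁ s a s') (hP₁1 : ∀ s a, ∑ s', P₁ s a s' = 1)
    (hP₂0 : ∀ s a s', 0 ≤ P₂ s a s') (hP₂1 : ∀ s a, ∑ s', P₂ s a s' = 1)
    (hR₁ : ∀ s a, |r₁ s a| ≤ R) (hR₂ : ∀ s a, |r₂ s a| ≤ R)
    (hr : ∀ s a, |r₁ s a - r₂ s a| ≤ εr)
    (hP : ∀ s a, ∑ s', |P₁ s a s' - P₂ s a s'| ≤ εP)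
    (Q₁ Q₂ : S → A → ℝ)
    (hQ₁ : ∀ s a, Q₁ s a = r₁ s a + γ * ∑ s', P₁ s a s' * (⨆ b, Q₁ s' b))
    (hQ₂ : ∀ s a, Q₂ s a = r₂ s a + γ * ∑ s', P₂ s a s' * (⨆ b, Q₂ s' b)) :
    ∀ s a, |Q₁ s a - Q₂ s a| ≤ εr / (1 - γ) + R * γ * εP / (1 - γ)^2 :=
  optimal_Q_perturbation_general γ hγ0 hγ1 r₁ r₂ P₁ P₂ R εr εP hP₁0 hP₁1 hP₂0 hP₂1 hR₂ hr hP Q₁ Q₂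
    hQ₁ hQ₂
end

section
/- Consider a two-player stochastic Stackelberg game on finite state space 𝒮 with leader action set A₁ and follower action set A₂ (|A₁| = A₁, |A₂| = A₂), rewards r₁, r₂ : 𝒮 × A₁ × A₂ → ℝ with |r_i| ≤ R, transition kernel P : 𝒮 × A₁ × A₂ → Δ(𝒮), and discount γ ∈ (0,1). Given a leader policy π₁, define the follower's induced MDP by r̄₂(s,a₂) = Σ_{a₁} π₁(a₁|s) r₂(s,a₁,a₂) and P̄₂(s'|s,a₂) = Σ_{a₁} π₁(a₁|s) P(s'|s,a₁,a₂); let Q₂* be the (unique bounded) solution of Q(s,a₂) = r̄₂(s,a₂) + γ Σ_{s'} P̄₂(s'|s,a₂) max_b Q(s',b); and let the follower respond with the softmax policy π₂(a|s) = exp(β Q₂*(s,a))/Σ_b exp(β Q₂*(s,b)). Define the leader's induced model r_{π₁}(s,a₁) = Σ_{a₂} π₂(a₂|s) r₁(s,a₁,a₂) and P_{π₁}(s'|s,a₁) = Σ_{a₂} π₂(a₂|s) P(s'|s,a₁,a₂), and analogously for another leader policy π̃₁. If ‖π₁(·|s) − π̃₁(·|s)‖₁ ≤ δ for every state s, then for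 all s, a₁, s': |r_{π₁}(s,a₁) − r_{π̃₁}(s,a₁)| ≤ δ · 2√2 β A₁ A₂^{3/2} R²/(1−γ)² and |P_{π₁}(s'|s,a₁) − P_{π̃₁}(s'|s,a₁)| ≤ δ · 2√2 β A₁ A₂^{3/2} R/(1−γ)². -/
open BigOperators Finset

section helpers

private lemma abs_ciSup_le {A : Type*} [Fintype A] [Nonempty A] (f : A → ℝ) {C : ℝ}
    (h : ∀ a, |f a| ≤ C) : |⨆ a, f a| ≤ C := by
  rw [abs_le]
  refine ⟨le_trans (abs_le.1 (h (Classical.arbitrary A))).1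
    (le_ciSup (Set.Finite.bddAbove (Set.finite_range f)) _), ciSup_le fun a => (abs_le.1 (h a)).2⟩

private lemma ciSup_sub_ciSup_le {A : Type*} [Fintype A] [Nonempty A] (f g : A → ℝ) {C : ℝ}
    (h : ∀ a, |f a - g a| ≤ C) : (⨆ a, f a) - (⨆ a, g a) ≤ C := by
  rw [sub_le_iff_le_add]
  refine ciSup_le fun a => ?_
  have h1 := (abs_le.1 (h a)).2
  have h2 : g a ≤ ⨆ a, g a := le_ciSup (Set.Finite.bddAbove (Set.finite_range g)) a
  linarith

private lemma abs_ciSup_sub_ciSup {A : Type*} [Fintype A] [Nonempty A] (f g : A → ℝ) {C : ℝ}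
    (h : ∀ a, |f a - g a| ≤ C) : |(⨆ a, f a) - (⨆ a, g a)| ≤ C := by
  rw [abs_sub_le_iff]
  exact ⟨ciSup_sub_ciSup_le f g h, ciSup_sub_ciSup_le g f (fun a => by rw [abs_sub_comm]; exact h a)⟩

private lemma exp_sub_exp_le {u v : ℝ} (h : v ≤ u) :
    Real.exp u - Real.exp v ≤ (u - v) * (Real.exp u + Real.exp v) := by
  have h2 : (-(u - v) + 1) * Real.exp (u - v) ≤ 1 := by
    have := mul_le_mul_of_nonneg_right (Real.add_one_le_exp (-(u - v))) (Real.exp_pos (u - v)).le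
    rwa [← Real.exp_add, neg_add_cancel, Real.exp_zero] at this
  have h3 : Real.exp v * Real.exp (u - v) = Real.exp u := by
    rw [← Real.exp_add]; ring_nf
  nlinarith [Real.exp_pos v, Real.exp_pos (u - v), sub_nonneg.2 h]

private lemma abs_exp_sub_exp (u v : ℝ) :
    |Real.exp u - Real.exp v| ≤ |u - v| * (Real.exp u + Real.exp v) := by
  rcases le_total v u with h | h
  · rw [abs_of_nonneg (sub_nonneg.2 (Real.exp_le_exp.2 h)), abs_of_nonneg (sub_nonneg.2 h)]
    exact exp_sub_exp_le h
  · rw [abs_sub_comm, abs_sub_comm u v, abs_of_nonneg (sub_nonneg.2 (Real.exp_le_exp.2 h)),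
      abs_of_nonneg (sub_nonneg.2 h)]
    have := exp_sub_exp_le h
    linarith

private lemma softmax_diff {A : Type*} [Fintype A] [Nonempty A] (x y : A → ℝ) {ε : ℝ}
    (h : ∀ a, |x a - y a| ≤ ε) :
    ∑ a, |Real.exp (x a) / (∑ b, Real.exp (x b)) - Real.exp (y a) / (∑ b, Real.exp (y b))|
      ≤ 4 * ε := by
  set Sx := ∑ b, Real.exp (x b) with hSxd
  set Sy := ∑ b, Real.exp (y b) with hSyd
  have hSx : 0 < Sx := Finset.sum_pos (fun b _ => Real.exp_pos _) univ_nonempty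
  have hSy : 0 < Sy := Finset.sum_pos (fun b _ => Real.exp_pos _) univ_nonempty
  have key : ∀ a, |Real.exp (x a) / Sx - Real.exp (y a) / Sy|
      ≤ 2 * ε * (Real.exp (x a) / Sx + Real.exp (y a) / Sy) := by
    intro a
    rw [div_sub_div _ _ hSx.ne' hSy.ne', abs_div, abs_of_pos (mul_pos hSx hSy),
      div_le_iff₀ (mul_pos hSx hSy)]
    have hre : 2 * ε * (Real.exp (x a) / Sx + Real.exp (y a) / Sy) * (Sx * Sy)
        = 2 * ε * (Real.exp (x a) * Sy + Real.exp (y a) * Sx) := by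
      field_simp
    rw [hre]
    have hnum : Real.exp (x a) * Sy - Real.exp (y a) * Sx
        = ∑ b, (Real.exp (x a) * Real.exp (y b) - Real.exp (y a) * Real.exp (x b)) := by
      rw [Finset.sum_sub_distrib, ← Finset.mul_sum, ← Finset.mul_sum]
    rw [mul_comm Sx (Real.exp (y a)), hnum]
    refine (Finset.abs_sum_le_sum_abs _ _).trans ?_
    have hterm : ∀ b ∈ univ, |Real.exp (x a) * Real.exp (y b) - Real.exp (y a) * Real.exp (x b)|
        ≤ 2 * ε * (Real.exp (x a) * Real.exp (y b) + Real.exp (y a) * Real.exp (x b)) := by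
      intro b _
      rw [← Real.exp_add, ← Real.exp_add]
      refine (abs_exp_sub_exp _ _).trans ?_
      refine mul_le_mul_of_nonneg_right ?_ (by positivity)
      have : x a + y b - (y a + x b) = (x a - y a) - (x b - y b) := by ring
      rw [this]
      calc |(x a - y a) - (x b - y b)| ≤ |x a - y a| + |x b - y b| := abs_sub _ _
        _ ≤ 2 * ε := by linarith [h a, h b]
    refine (Finset.sum_le_sum hterm).trans (le_of_eq ?_)
    rw [← Finset.mul_sum, Finset.sum_add_distrib, ← Finset.mul_sum, ← Finset.mul_sum]
  refine (Finset.sum_le_sum (fun a _ => key a)).trans ?_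
  rw [← Finset.mul_sum, Finset.sum_add_distrib, ← Finset.sum_div, ← Finset.sum_div,
    ← hSxd, ← hSyd, div_self hSx.ne', div_self hSy.ne']
  ring_nf
  norm_num

private lemma qbound {S A : Type*} [Fintype S] [Fintype A] [Nonempty S] [Nonempty A]
    {γ R : ℝ} (hγ0 : 0 < γ) (hγ1 : γ < 1)
    (rb : S → A → ℝ) (hr : ∀ s a, |rb s a| ≤ R)
    (Pb : S → A → S → ℝ) (hP0 : ∀ s a s', 0 ≤ Pb s a s') (hP1 : ∀ s a, ∑ s', Pb s a s' = 1)
    (Q : S → A → ℝ)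
    (hQ : ∀ s a, Q s a = rb s a + γ * ∑ s', Pb s a s' * (⨆ b, Q s' b)) :
    ∀ s a, |Q s a| ≤ R / (1 - γ) := by
  obtain ⟨p₀, -, hmax⟩ := Finset.exists_max_image (univ : Finset (S × A))
      (fun p => |Q p.1 p.2|) univ_nonempty
  have hmax' : ∀ s a, |Q s a| ≤ |Q p₀.1 p₀.2| := fun s a => hmax (s, a) (mem_univ _)
  set C := |Q p₀.1 p₀.2| with hC
  have h1γ : 0 < 1 - γ := by linarith
  have hCb : C ≤ R + γ * C := by
    conv_lhs => rw [hC, hQ p₀.1 p₀.2]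
    refine (abs_add_le _ _).trans ?_
    have h2 : |γ * ∑ s', Pb p₀.1 p₀.2 s' * (⨆ b, Q s' b)| ≤ γ * C := by
      rw [abs_mul, abs_of_pos hγ0]
      refine mul_le_mul_of_nonneg_left ?_ hγ0.le
      refine (Finset.abs_sum_le_sum_abs _ _).trans ?_
      calc ∑ s', |Pb p₀.1 p₀.2 s' * (⨆ b, Q s' b)|
          ≤ ∑ s', Pb p₀.1 p₀.2 s' * C := by
            refine Finset.sum_le_sum fun s' _ => ?_
            rw [abs_mul, abs_of_nonneg (hP0 _ _ _)]
            exact mul_le_mul_of_nonneg_left (abs_ciSup_le _ (fun b => hmax' s' b)) (hP0 _ _ _)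
        _ = C := by rw [← Finset.sum_mul, hP1, one_mul]
    linarith [hr p₀.1 p₀.2]
  have hCfin : C ≤ R / (1 - γ) := by rw [le_div_iff₀ h1γ]; nlinarith
  exact fun s a => (hmax' s a).trans hCfin

private lemma qdiff {S A : Type*} [Fintype S] [Fintype A] [Nonempty S] [Nonempty A]
    {γ R δ : ℝ} (hγ0 : 0 < γ) (hγ1 : γ < 1) (hR : 0 ≤ R) (hδ0 : 0 ≤ δ)
    (rb rb' : S → A → ℝ) (hdr : ∀ s a, |rb s a - rb' s a| ≤ δ * R)
    (Pb Pb' : S → A → S → ℝ)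
    (hP0 : ∀ s a s', 0 ≤ Pb s a s') (hP1 : ∀ s a, ∑ s', Pb s a s' = 1)
    (hdP : ∀ s a, ∑ s', |Pb s a s' - Pb' s a s'| ≤ δ)
    (Q Q' : S → A → ℝ)
    (hQ : ∀ s a, Q s a = rb s a + γ * ∑ s', Pb s a s' * (⨆ b, Q s' b))
    (hQ' : ∀ s a, Q' s a = rb' s a + γ * ∑ s', Pb' s a s' * (⨆ b, Q' s' b))
    (hV' : ∀ s, |⨆ b, Q' s b| ≤ R / (1 - γ)) :
    ∀ s a, |Q s a - Q' s a| ≤ δ * R / (1 - γ) ^ 2 := by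
  obtain ⟨p₀, -, hmax⟩ := Finset.exists_max_image (univ : Finset (S × A))
      (fun p => |Q p.1 p.2 - Q' p.1 p.2|) univ_nonempty
  have hmax' : ∀ s a, |Q s a - Q' s a| ≤ |Q p₀.1 p₀.2 - Q' p₀.1 p₀.2| :=
    fun s a => hmax (s, a) (mem_univ _)
  set D := |Q p₀.1 p₀.2 - Q' p₀.1 p₀.2| with hD
  have h1γ : 0 < 1 - γ := by linarith
  have hDb : D ≤ δ * R + γ * D + γ * (δ * (R / (1 - γ))) := by
    have hdec : Q p₀.1 p₀.2 - Q' p₀.1 p₀.2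
        = (rb p₀.1 p₀.2 - rb' p₀.1 p₀.2)
          + γ * (∑ s', Pb p₀.1 p₀.2 s' * ((⨆ b, Q s' b) - (⨆ b, Q' s' b)))
          + γ * (∑ s', (Pb p₀.1 p₀.2 s' - Pb' p₀.1 p₀.2 s') * (⨆ b, Q' s' b)) := by
      have e1 : (∑ s', Pb p₀.1 p₀.2 s' * (⨆ b, Q s' b))
          - (∑ s', Pb' p₀.1 p₀.2 s' * (⨆ b, Q' s' b))
          = (∑ s', Pb p₀.1 p₀.2 s' * ((⨆ b, Q s' b) - (⨆ b, Q' s' b)))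
            + ∑ s', (Pb p₀.1 p₀.2 s' - Pb' p₀.1 p₀.2 s') * (⨆ b, Q' s' b) := by
        rw [← Finset.sum_add_distrib, ← Finset.sum_sub_distrib]
        exact Finset.sum_congr rfl (fun s' _ => by ring)
      rw [hQ p₀.1 p₀.2, hQ' p₀.1 p₀.2]
      linear_combination γ * e1
    conv_lhs => rw [hD, hdec]
    have t1 : |γ * (∑ s', Pb p₀.1 p₀.2 s' * ((⨆ b, Q s' b) - (⨆ b, Q' s' b)))| ≤ γ * D := by
      rw [abs_mul, abs_of_pos hγ0]
      refine mul_le_mul_of_nonneg_left ?_ hγ0.le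
      refine (Finset.abs_sum_le_sum_abs _ _).trans ?_
      calc ∑ s', |Pb p₀.1 p₀.2 s' * ((⨆ b, Q s' b) - (⨆ b, Q' s' b))|
          ≤ ∑ s', Pb p₀.1 p₀.2 s' * D := by
            refine Finset.sum_le_sum fun s' _ => ?_
            rw [abs_mul, abs_of_nonneg (hP0 _ _ _)]
            exact mul_le_mul_of_nonneg_left
              (abs_ciSup_sub_ciSup _ _ (fun b => hmax' s' b)) (hP0 _ _ _)
        _ = D := by rw [← Finset.sum_mul, hP1, one_mul]
    have t2 : |γ * (∑ s', (Pb p₀.1 p₀.2 s' - Pb' p₀.1 p₀.2 s') * (⨆ b, Q' s' b))|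
        ≤ γ * (δ * (R / (1 - γ))) := by
      rw [abs_mul, abs_of_pos hγ0]
      refine mul_le_mul_of_nonneg_left ?_ hγ0.le
      refine (Finset.abs_sum_le_sum_abs _ _).trans ?_
      calc ∑ s', |(Pb p₀.1 p₀.2 s' - Pb' p₀.1 p₀.2 s') * (⨆ b, Q' s' b)|
          ≤ ∑ s', |Pb p₀.1 p₀.2 s' - Pb' p₀.1 p₀.2 s'| * (R / (1 - γ)) := by
            refine Finset.sum_le_sum fun s' _ => ?_
            rw [abs_mul]
            exact mul_le_mul_of_nonneg_left (hV' s') (abs_nonneg _)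
        _ = (∑ s', |Pb p₀.1 p₀.2 s' - Pb' p₀.1 p₀.2 s'|) * (R / (1 - γ)) :=
            (Finset.sum_mul _ _ _).symm
        _ ≤ δ * (R / (1 - γ)) :=
            mul_le_mul_of_nonneg_right (hdP _ _) (by positivity)
    calc |(rb p₀.1 p₀.2 - rb' p₀.1 p₀.2)
          + γ * (∑ s', Pb p₀.1 p₀.2 s' * ((⨆ b, Q s' b) - (⨆ b, Q' s' b)))
          + γ * (∑ s', (Pb p₀.1 p₀.2 s' - Pb' p₀.1 p₀.2 s') * (⨆ b, Q' s' b))|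
        ≤ |(rb p₀.1 p₀.2 - rb' p₀.1 p₀.2)
          + γ * (∑ s', Pb p₀.1 p₀.2 s' * ((⨆ b, Q s' b) - (⨆ b, Q' s' b)))|
          + |γ * (∑ s', (Pb p₀.1 p₀.2 s' - Pb' p₀.1 p₀.2 s') * (⨆ b, Q' s' b))| := abs_add_le _ _
      _ ≤ |rb p₀.1 p₀.2 - rb' p₀.1 p₀.2|
          + |γ * (∑ s', Pb p₀.1 p₀.2 s' * ((⨆ b, Q s' b) - (⨆ b, Q' s' b)))|
          + |γ * (∑ s', (Pb p₀.1 p₀.2 s' - Pb' p₀.1 p₀.2 s') * (⨆ b, Q' s' b))| := by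
            have := abs_add_le (rb p₀.1 p₀.2 - rb' p₀.1 p₀.2)
              (γ * (∑ s', Pb p₀.1 p₀.2 s' * ((⨆ b, Q s' b) - (⨆ b, Q' s' b))))
            linarith
      _ ≤ δ * R + γ * D + γ * (δ * (R / (1 - γ))) := by
            have := hdr p₀.1 p₀.2
            linarith
  have hDfin : D ≤ δ * R / (1 - γ) ^ 2 := by
    rw [le_div_iff₀ (by positivity)]
    have hmul := mul_le_mul_of_nonneg_right hDb h1γ.le
    have he : (δ * R + γ * D + γ * (δ * (R / (1 - γ)))) * (1 - γ)
        = δ * R * (1 - γ) + γ * D * (1 - γ) + γ * δ * R := by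
      field_simp
    rw [he] at hmul
    nlinarith [hmul]
  exact fun s a => (hmax' s a).trans hDfin

end helpers

/-- Lemma 1: sensitivity of the leader's induced reward and
transition in a two-player stochastic Stackelberg game with a softmax follower. -/
theorem stackelberg_sensitivity
    {S A1 A2 : Type*} [Fintype S] [Fintype A1] [Fintype A2]
    [Nonempty S] [Nonempty A1] [Nonempty A2]
    (γ β R δ : ℝ) (hγ0 : 0 < γ) (hγ1 : γ < 1) (hβ : 0 < β)
    (r₁ r₂ : S → A1 → A2 → ℝ)
    (hr₁ : ∀ s a₁ a₂, |r₁ s a₁ a₂| ≤ R) (hr₂ : ∀ s a₁ a₂, |r₂ s a₁ a₂| ≤ R)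
    (P : S → A1 → A2 → S → ℝ)
    (hP0 : ∀ s a₁ a₂ s', 0 ≤ P s a₁ a₂ s') (hP1 : ∀ s a₁ a₂, ∑ s', P s a₁ a₂ s' = 1)
    -- two leader policies
    (π₁ π₁' : S → A1 → ℝ)
    (hπ₁0 : ∀ s a₁, 0 ≤ π₁ s a₁) (hπ₁1 : ∀ s, ∑ a₁, π₁ s a₁ = 1)
    (hπ₁'0 : ∀ s a₁, 0 ≤ π₁' s a₁) (hπ₁'1 : ∀ s, ∑ a₁, π₁' s a₁ = 1)
    (hδ : ∀ s, ∑ a₁, |π₁ s a₁ - π₁' s a₁| ≤ δ)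
    -- optimal follower Q-functions in the MDPs induced by the two leader policies
    (Q Q' : S → A2 → ℝ)
    (hQ : ∀ s a₂, Q s a₂ = (∑ a₁, π₁ s a₁ * r₂ s a₁ a₂)
        + γ * ∑ s', (∑ a₁, π₁ s a₁ * P s a₁ a₂ s') * (⨆ b, Q s' b))
    (hQ' : ∀ s a₂, Q' s a₂ = (∑ a₁, π₁' s a₁ * r₂ s a₁ a₂)
        + γ * ∑ s', (∑ a₁, π₁' s a₁ * P s a₁ a₂ s') * (⨆ b, Q' s' b))
    -- softmax follower responses
    (π₂ π₂' : S → A2 → ℝ)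
    (hπ₂ : ∀ s a₂, π₂ s a₂ = Real.exp (β * Q s a₂) / ∑ b, Real.exp (β * Q s b))
    (hπ₂' : ∀ s a₂, π₂' s a₂ = Real.exp (β * Q' s a₂) / ∑ b, Real.exp (β * Q' s b)) :
    ∀ (s : S) (a₁ : A1) (s' : S),
      |(∑ a₂, π₂ s a₂ * r₁ s a₁ a₂) - (∑ a₂, π₂' s a₂ * r₁ s a₁ a₂)|
        ≤ δ * (2 * Real.sqrt 2 * β * (Fintype.card A1 : ℝ) * ((Fintype.card A2 : ℝ)
            * Real.sqrt (Fintype.card A2)) * R^2 / (1 - γ)^2)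
      ∧ |(∑ a₂, π₂ s a₂ * P s a₁ a₂ s') - (∑ a₂, π₂' s a₂ * P s a₁ a₂ s')|
        ≤ δ * (2 * Real.sqrt 2 * β * (Fintype.card A1 : ℝ) * ((Fintype.card A2 : ℝ)
            * Real.sqrt (Fintype.card A2)) * R / (1 - γ)^2) := by
  have h1γ : 0 < 1 - γ := by linarith
  have hR : 0 ≤ R :=
    (abs_nonneg _).trans (hr₁ (Classical.arbitrary S) (Classical.arbitrary A1)
      (Classical.arbitrary A2))
  have hδ0 : 0 ≤ δ :=
    (Finset.sum_nonneg fun a₁ _ => abs_nonneg _).trans (hδ (Classical.arbitrary S))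
  -- bounds on the induced reward/transition for an arbitrary leader policy
  have hrb : ∀ (π : S → A1 → ℝ), (∀ s a₁, 0 ≤ π s a₁) → (∀ s, ∑ a₁, π s a₁ = 1) →
      ∀ s a₂, |∑ a₁, π s a₁ * r₂ s a₁ a₂| ≤ R := by
    intro π hπ0 hπ1 s a₂
    refine (Finset.abs_sum_le_sum_abs _ _).trans ?_
    calc ∑ a₁, |π s a₁ * r₂ s a₁ a₂| ≤ ∑ a₁, π s a₁ * R := by
          refine Finset.sum_le_sum fun a₁ _ => ?_
          rw [abs_mul, abs_of_nonneg (hπ0 s a₁)]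
          exact mul_le_mul_of_nonneg_left (hr₂ s a₁ a₂) (hπ0 s a₁)
      _ = R := by rw [← Finset.sum_mul, hπ1, one_mul]
  have hPb0 : ∀ (π : S → A1 → ℝ), (∀ s a₁, 0 ≤ π s a₁) →
      ∀ s a₂ s', 0 ≤ ∑ a₁, π s a₁ * P s a₁ a₂ s' :=
    fun π hπ0 s a₂ s' => Finset.sum_nonneg fun a₁ _ => mul_nonneg (hπ0 s a₁) (hP0 s a₁ a₂ s')
  have hPb1 : ∀ (π : S → A1 → ℝ), (∀ s, ∑ a₁, π s a₁ = 1) →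
      ∀ s a₂, ∑ s', ∑ a₁, π s a₁ * P s a₁ a₂ s' = 1 := by
    intro π hπ1 s a₂
    rw [Finset.sum_comm]
    calc ∑ a₁, ∑ s', π s a₁ * P s a₁ a₂ s' = ∑ a₁, π s a₁ * ∑ s', P s a₁ a₂ s' := by
          refine Finset.sum_congr rfl fun a₁ _ => ?_
          rw [Finset.mul_sum]
      _ = 1 := by simp only [hP1, mul_one]; exact hπ1 s
  -- reward and transition differences of the induced follower MDPs
  have hdr : ∀ s a₂, |(∑ a₁, π₁ s a₁ * r₂ s a₁ a₂) - ∑ a₁, π₁' s a₁ * r₂ s a₁ a₂| ≤ δ * R := by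
    intro s a₂
    rw [← Finset.sum_sub_distrib]
    refine (Finset.abs_sum_le_sum_abs _ _).trans ?_
    calc ∑ a₁, |π₁ s a₁ * r₂ s a₁ a₂ - π₁' s a₁ * r₂ s a₁ a₂|
        = ∑ a₁, |π₁ s a₁ - π₁' s a₁| * |r₂ s a₁ a₂| := by
          refine Finset.sum_congr rfl fun a₁ _ => ?_
          rw [← sub_mul, abs_mul]
      _ ≤ ∑ a₁, |π₁ s a₁ - π₁' s a₁| * R :=
          Finset.sum_le_sum fun a₁ _ =>
            mul_le_mul_of_nonneg_left (hr₂ s a₁ a₂) (abs_nonneg _)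
      _ = (∑ a₁, |π₁ s a₁ - π₁' s a₁|) * R := (Finset.sum_mul _ _ _).symm
      _ ≤ δ * R := mul_le_mul_of_nonneg_right (hδ s) hR
  have hdP : ∀ s a₂,
      ∑ s', |(∑ a₁, π₁ s a₁ * P s a₁ a₂ s') - ∑ a₁, π₁' s a₁ * P s a₁ a₂ s'| ≤ δ := by
    intro s a₂
    calc ∑ s', |(∑ a₁, π₁ s a₁ * P s a₁ a₂ s') - ∑ a₁, π₁' s a₁ * P s a₁ a₂ s'|
        ≤ ∑ s', ∑ a₁, |π₁ s a₁ - π₁' s a₁| * P s a₁ a₂ s' := by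
          refine Finset.sum_le_sum fun s' _ => ?_
          rw [← Finset.sum_sub_distrib]
          refine (Finset.abs_sum_le_sum_abs _ _).trans ?_
          refine Finset.sum_le_sum fun a₁ _ => ?_
          rw [← sub_mul, abs_mul, abs_of_nonneg (hP0 s a₁ a₂ s')]
      _ = ∑ a₁, |π₁ s a₁ - π₁' s a₁| * ∑ s', P s a₁ a₂ s' := by
          rw [Finset.sum_comm]
          exact Finset.sum_congr rfl fun a₁ _ => (Finset.mul_sum _ _ _).symm
      _ ≤ δ := by simp only [hP1, mul_one]; exact hδ s
  -- Q' is bounded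
  have hQb' : ∀ s a₂, |Q' s a₂| ≤ R / (1 - γ) :=
    qbound hγ0 hγ1 _ (hrb π₁' hπ₁'0 hπ₁'1) _ (hPb0 π₁' hπ₁'0) (hPb1 π₁' hπ₁'1) Q' hQ'
  have hV' : ∀ s, |⨆ b, Q' s b| ≤ R / (1 - γ) := fun s => abs_ciSup_le _ (hQb' s)
  -- Q sensitivity
  have hQd : ∀ s a₂, |Q s a₂ - Q' s a₂| ≤ δ * R / (1 - γ) ^ 2 :=
    qdiff hγ0 hγ1 hR hδ0 _ _ hdr _ _ (hPb0 π₁ hπ₁0) (hPb1 π₁ hπ₁1) hdP Q Q' hQ hQ' hV'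
  -- ℓ¹ sensitivity of the softmax response
  intro s a₁ s'
  have hl1 : ∑ a₂, |π₂ s a₂ - π₂' s a₂| ≤ 4 * (β * (δ * R / (1 - γ) ^ 2)) := by
    simp only [hπ₂, hπ₂']
    refine softmax_diff (fun a => β * Q s a) (fun a => β * Q' s a) fun a => ?_
    rw [← mul_sub, abs_mul, abs_of_pos hβ]
    exact mul_le_mul_of_nonneg_left (hQd s a) hβ.le
  have main : ∀ (f : A2 → ℝ) (M : ℝ), 0 ≤ M → (∀ a₂, |f a₂| ≤ M) →
      |(∑ a₂, π₂ s a₂ * f a₂) - ∑ a₂, π₂' s a₂ * f a₂|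
        ≤ 4 * (β * (δ * R / (1 - γ) ^ 2)) * M := by
    intro f M hM hf
    rw [← Finset.sum_sub_distrib]
    refine (Finset.abs_sum_le_sum_abs _ _).trans ?_
    calc ∑ a₂, |π₂ s a₂ * f a₂ - π₂' s a₂ * f a₂|
        = ∑ a₂, |π₂ s a₂ - π₂' s a₂| * |f a₂| := by
          refine Finset.sum_congr rfl fun a₂ _ => ?_
          rw [← sub_mul, abs_mul]
      _ ≤ ∑ a₂, |π₂ s a₂ - π₂' s a₂| * M :=
          Finset.sum_le_sum fun a₂ _ => mul_le_mul_of_nonneg_left (hf a₂) (abs_nonneg _)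
      _ = (∑ a₂, |π₂ s a₂ - π₂' s a₂|) * M := (Finset.sum_mul _ _ _).symm
      _ ≤ 4 * (β * (δ * R / (1 - γ) ^ 2)) * M := mul_le_mul_of_nonneg_right hl1 hM
  by_cases hA2 : Fintype.card A2 = 1
  · -- singleton follower action space : both softmax policies are identically 1
    haveI : Subsingleton A2 := Fintype.card_le_one_iff_subsingleton.mp (le_of_eq hA2)
    obtain ⟨a0⟩ := (inferInstance : Nonempty A2)
    have hsum : ∀ g : A2 → ℝ, ∑ b, g b = g a0 := fun g => Fintype.sum_subsingleton g a0
    have hz : ∀ (f : A2 → ℝ),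
        |(∑ a₂, π₂ s a₂ * f a₂) - ∑ a₂, π₂' s a₂ * f a₂| = 0 := by
      intro f
      rw [hsum (fun a₂ => π₂ s a₂ * f a₂), hsum (fun a₂ => π₂' s a₂ * f a₂),
        hπ₂ s a0, hπ₂' s a0, hsum (fun b => Real.exp (β * Q s b)),
        hsum (fun b => Real.exp (β * Q' s b)), div_self (Real.exp_ne_zero _),
        div_self (Real.exp_ne_zero _), sub_self, abs_zero]
    have hc0 : (0:ℝ) ≤ 2 * Real.sqrt 2 * β * (Fintype.card A1 : ℝ)
        * ((Fintype.card A2 : ℝ) * Real.sqrt (Fintype.card A2)) := by positivity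
    constructor
    · rw [hz (fun a₂ => r₁ s a₁ a₂)]
      exact mul_nonneg hδ0 (div_nonneg (mul_nonneg hc0 (sq_nonneg R)) (by positivity))
    · rw [hz (fun a₂ => P s a₁ a₂ s')]
      exact mul_nonneg hδ0 (div_nonneg (mul_nonneg hc0 hR) (by positivity))
  · -- at least two follower actions
    have hA2' : (2:ℝ) ≤ (Fintype.card A2 : ℝ) := by
      have := Fintype.one_lt_card_iff_nontrivial (α := A2)
      have h1 : 1 ≤ Fintype.card A2 := Fintype.card_pos
      have : 2 ≤ Fintype.card A2 := by omega
      exact_mod_cast this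
    have hA1' : (1:ℝ) ≤ (Fintype.card A1 : ℝ) := by
      exact_mod_cast (Fintype.card_pos : 0 < Fintype.card A1)
    have hs2 : (1:ℝ) ≤ Real.sqrt 2 := by
      rw [show (1:ℝ) = Real.sqrt 1 by rw [Real.sqrt_one]]
      exact Real.sqrt_le_sqrt (by norm_num)
    have hsA : (1:ℝ) ≤ Real.sqrt (Fintype.card A2) := by
      rw [show (1:ℝ) = Real.sqrt 1 by rw [Real.sqrt_one]]
      exact Real.sqrt_le_sqrt (by linarith)
    have hc : (4:ℝ) ≤ 2 * Real.sqrt 2 * (Fintype.card A1 : ℝ)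
        * ((Fintype.card A2 : ℝ) * Real.sqrt (Fintype.card A2)) := by
      have e1 : (2:ℝ) * 1 ≤ 2 * Real.sqrt 2 * (Fintype.card A1 : ℝ) :=
        mul_le_mul (by linarith) hA1' zero_le_one (by positivity)
      have e2 : (2:ℝ) ≤ (Fintype.card A2 : ℝ) * Real.sqrt (Fintype.card A2) :=
        hA2'.trans (le_mul_of_one_le_right (by linarith) hsA)
      calc (4:ℝ) = 2 * 1 * 2 := by norm_num
        _ ≤ 2 * Real.sqrt 2 * (Fintype.card A1 : ℝ)
            * ((Fintype.card A2 : ℝ) * Real.sqrt (Fintype.card A2)) :=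
          mul_le_mul e1 e2 (by norm_num) (by positivity)
    constructor
    · refine (main (fun a₂ => r₁ s a₁ a₂) R hR (fun a₂ => hr₁ s a₁ a₂)).trans ?_
      have hK : (0:ℝ) ≤ β * δ * (R * R) / (1 - γ) ^ 2 :=
        div_nonneg (mul_nonneg (mul_nonneg hβ.le hδ0) (mul_self_nonneg R)) (by positivity)
      calc 4 * (β * (δ * R / (1 - γ) ^ 2)) * R
          = 4 * (β * δ * (R * R) / (1 - γ) ^ 2) := by ring
        _ ≤ (2 * Real.sqrt 2 * (Fintype.card A1 : ℝ)
              * ((Fintype.card A2 : ℝ) * Real.sqrt (Fintype.card A2)))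
            * (β * δ * (R * R) / (1 - γ) ^ 2) := mul_le_mul_of_nonneg_right hc hK
        _ = δ * (2 * Real.sqrt 2 * β * (Fintype.card A1 : ℝ) * ((Fintype.card A2 : ℝ)
              * Real.sqrt (Fintype.card A2)) * R ^ 2 / (1 - γ) ^ 2) := by ring
    · have hPle : ∀ a₂, |P s a₁ a₂ s'| ≤ 1 := by
        intro a₂
        rw [abs_of_nonneg (hP0 s a₁ a₂ s')]
        calc P s a₁ a₂ s' ≤ ∑ t, P s a₁ a₂ t :=
              Finset.single_le_sum (fun t _ => hP0 s a₁ a₂ t) (mem_univ s')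
          _ = 1 := hP1 s a₁ a₂
      refine (main (fun a₂ => P s a₁ a₂ s') 1 one_pos.le hPle).trans ?_
      have hK : (0:ℝ) ≤ β * δ * R / (1 - γ) ^ 2 :=
        div_nonneg (mul_nonneg (mul_nonneg hβ.le hδ0) hR) (by positivity)
      calc 4 * (β * (δ * R / (1 - γ) ^ 2)) * 1
          = 4 * (β * δ * R / (1 - γ) ^ 2) := by ring
        _ ≤ (2 * Real.sqrt 2 * (Fintype.card A1 : ℝ)
              * ((Fintype.card A2 : ℝ) * Real.sqrt (Fintype.card A2)))
            * (β * δ * R / (1 - γ) ^ 2) := mul_le_mul_of_nonneg_right hc hK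
        _ = δ * (2 * Real.sqrt 2 * β * (Fintype.card A1 : ℝ) * ((Fintype.card A2 : ℝ)
              * Real.sqrt (Fintype.card A2)) * R / (1 - γ) ^ 2) := by ring
end

section
/- Define the Lagrangian L_λ(d, ν; g, ω) = ν^⊤(θ + γ μ^⊤ g − ω) − (λ/2) ν^⊤ν + ⟨g, ρ⟩ + ⟨d, Φω − B^⊤g⟩, and for a policy π set d^{π,ν}(s,a) = π(a|s)·(ρ(s) + γ·μ(s)^⊤ν) and g^{π,ω}(s) = Σ_a π(a|s)·φ(s,a)^⊤ω. (i) Let π* be a policy whose occupancy measure d^{π*} ∈ ℝ^{SA} satisfies d^{π*}(s,a) = π*(a|s)·Σ_b d^{π*}(s,b) and B d^{π*} = ρ + γ μ Φ^⊤ d^{π*}, and let ν* = Φ^⊤ d^{π*}. Then for every ω ∈ ℝ^D: L_λ(d^{π*,ν*}, ν*; g^{π*,ω}, ω) = ν*^⊤θ − (λ/2)‖ν*‖₂². (ii) Let π be a policy with value function V^π : 𝒮 → ℝ satisfying V^π(s) = Σ_a π(a|s)(φ(s,a)^⊤θ + γ Σ_{s'} (φ(s,a)^⊤μ(s')) V^π(s')),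 and set ω* = θ + γ μ^⊤ V^π. Then for every ν ∈ ℝ^D: L_λ(d^{π,ν}, ν; g^{π,ω*}, ω*) = ⟨V^π, ρ⟩ − (λ/2)‖ν‖₂². -/
open Matrix BigOperators

/-- Lemma: values of the Lagrangian at comparator primal and
dual points, used in the regret analysis of the primal–dual algorithm. -/
theorem lagrangian_comparator_values
    (S A D : ℕ)
    (γ lam : ℝ) (hγ0 : 0 < γ) (hγ1 : γ < 1) (hlam : 0 < lam)
    (ρ : Fin S → ℝ) (hρ0 : ∀ s, 0 ≤ ρ s) (hρ1 : ∑ s, ρ s = 1)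
    (θ : Fin D → ℝ) (μ : Matrix (Fin S) (Fin D) ℝ)
    (Φ : Matrix (Fin S × Fin A) (Fin D) ℝ)
    (B : Matrix (Fin S) (Fin S × Fin A) ℝ)
    (hB : ∀ s sa, B s sa = if sa.1 = s then 1 else 0)
    (L : (Fin S × Fin A → ℝ) → (Fin D → ℝ) → (Fin S → ℝ) → (Fin D → ℝ) → ℝ)
    (hL : ∀ d₀ ν₀ g₀ ω₀, L d₀ ν₀ g₀ ω₀ =
      ν₀ ⬝ᵥ (θ + γ • μᵀ.mulVec g₀ - ω₀) - lam / 2 * (ν₀ ⬝ᵥ ν₀)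
        + g₀ ⬝ᵥ ρ + d₀ ⬝ᵥ (Φ.mulVec ω₀ - Bᵀ.mulVec g₀)) :
    -- part (i)
    (∀ πs : Fin S → Fin A → ℝ,
      (∀ s a, 0 ≤ πs s a) → (∀ s, ∑ a, πs s a = 1) →
      ∀ dπ : Fin S × Fin A → ℝ,
      (∀ s a, dπ (s, a) = πs s a * ∑ b, dπ (s, b)) →
      B.mulVec dπ = ρ + γ • ((μ * Φᵀ).mulVec dπ) →
      ∀ ω : Fin D → ℝ,
        L (fun sc => πs sc.1 sc.2 * (ρ sc.1 + γ * (μ sc.1 ⬝ᵥ Φᵀ.mulVec dπ)))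
          (Φᵀ.mulVec dπ)
          (fun s => ∑ a, πs s a * (Φ (s, a) ⬝ᵥ ω)) ω
        = (Φᵀ.mulVec dπ) ⬝ᵥ θ
            - lam / 2 * ((Φᵀ.mulVec dπ) ⬝ᵥ (Φᵀ.mulVec dπ)))
    ∧
    -- part (ii)
    (∀ πp : Fin S → Fin A → ℝ,
      (∀ s a, 0 ≤ πp s a) → (∀ s, ∑ a, πp s a = 1) →
      ∀ Vp : Fin S → ℝ,
      (∀ s, Vp s = ∑ a, πp s a *
          (Φ (s, a) ⬝ᵥ θ + γ * ∑ s', (Φ (s, a) ⬝ᵥ μ s') * Vp s')) →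
      ∀ ν : Fin D → ℝ,
        L (fun sc => πp sc.1 sc.2 * (ρ sc.1 + γ * (μ sc.1 ⬝ᵥ ν))) ν
          (fun s => ∑ a, πp s a * (Φ (s, a) ⬝ᵥ (θ + γ • μᵀ.mulVec Vp)))
          (θ + γ • μᵀ.mulVec Vp)
        = Vp ⬝ᵥ ρ - lam / 2 * (ν ⬝ᵥ ν)) := by
  -- Bᵀ.mulVec g is just g at the first coordinate
  have hBT : ∀ (g : Fin S → ℝ) (sa : Fin S × Fin A), Bᵀ.mulVec g sa = g sa.1 := by
    intro g sa
    simp only [Matrix.mulVec, dotProduct, Matrix.transpose_apply, hB]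
    simp
  -- the "complementary slackness" term vanishes for the structured d
  have hslack : ∀ (π : Fin S → Fin A → ℝ), (∀ s, ∑ a, π s a = 1) →
      ∀ (c : Fin S → ℝ) (w : Fin D → ℝ),
      (fun sc : Fin S × Fin A => π sc.1 sc.2 * c sc.1) ⬝ᵥ
        (Φ.mulVec w - Bᵀ.mulVec (fun s => ∑ a, π s a * (Φ (s, a) ⬝ᵥ w))) = 0 := by
    intro π hπ1 c w
    set G : Fin S → ℝ := fun s => ∑ a, π s a * (Φ (s, a) ⬝ᵥ w) with hG
    have hmv : ∀ sa : Fin S × Fin A, Φ.mulVec w sa = Φ sa ⬝ᵥ w := fun _ => rfl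
    show ∑ sa : Fin S × Fin A,
      (π sa.1 sa.2 * c sa.1) * (Φ.mulVec w sa - Bᵀ.mulVec G sa) = 0
    simp only [hBT, hmv]
    rw [Fintype.sum_prod_type]
    apply Finset.sum_eq_zero
    intro s _
    have h1 : ∀ a : Fin A, π s a * c s * (Φ (s, a) ⬝ᵥ w - G s)
        = c s * (π s a * (Φ (s, a) ⬝ᵥ w)) - (c s * G s) * π s a := by
      intro a; ring
    rw [Finset.sum_congr rfl (fun a _ => h1 a), Finset.sum_sub_distrib,
      ← Finset.mul_sum, ← Finset.mul_sum, hπ1 s, mul_one]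
    have hGs : G s = ∑ i : Fin A, π s i * (Φ (s, i) ⬝ᵥ w) := rfl
    rw [hGs, sub_self]
  constructor
  · -- part (i)
    intro πs hπ0 hπ1 dπ hdπ hflow ω
    set ν : Fin D → ℝ := Φᵀ.mulVec dπ with hν
    set g : Fin S → ℝ := fun s => ∑ a, πs s a * (Φ (s, a) ⬝ᵥ ω) with hg
    rw [hL]
    have h3 := hslack πs hπ1 (fun s => ρ s + γ * (μ s ⬝ᵥ ν)) ω
    rw [h3, add_zero]
    -- remaining: ν ⬝ᵥ (θ + γ • μᵀ.mulVec g − ω) − λ/2‖ν‖² + g ⬝ᵥ ρ = ν⬝θ − λ/2‖ν‖²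
    have key : γ * (ν ⬝ᵥ μᵀ.mulVec g) + g ⬝ᵥ ρ = ν ⬝ᵥ ω := by
      -- ν ⬝ᵥ μᵀ g = (μ ν) ⬝ᵥ g
      have h4 : ν ⬝ᵥ μᵀ.mulVec g = μ.mulVec ν ⬝ᵥ g := by
        rw [Matrix.dotProduct_mulVec]
        congr 1
        funext s
        simp [Matrix.vecMul, Matrix.mulVec, dotProduct, Matrix.transpose_apply,
          mul_comm]
      have h5 : γ * (μ.mulVec ν ⬝ᵥ g) + g ⬝ᵥ ρ = g ⬝ᵥ (ρ + γ • μ.mulVec ν) := by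
        rw [dotProduct_add, dotProduct_smul, dotProduct_comm]
        simp [smul_eq_mul]; ring
      have h6 : ρ + γ • μ.mulVec ν = B.mulVec dπ := by
        rw [hflow, Matrix.mulVec_mulVec]
      have h7 : ∀ s, B.mulVec dπ s = ∑ a, dπ (s, a) := by
        intro s
        simp only [Matrix.mulVec, dotProduct, hB]
        rw [Fintype.sum_prod_type]
        simp [Finset.sum_ite_eq]
      have h9 : ν ⬝ᵥ ω = ∑ sa : Fin S × Fin A, dπ sa * (Φ sa ⬝ᵥ ω) := by
        simp only [hν, Matrix.mulVec, dotProduct, Matrix.transpose_apply,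
          Finset.sum_mul, Finset.mul_sum]
        rw [Finset.sum_comm]
        apply Finset.sum_congr rfl
        intro sa _
        apply Finset.sum_congr rfl
        intro i _
        ring
      have h8 : g ⬝ᵥ B.mulVec dπ = ν ⬝ᵥ ω := by
        rw [h9, Fintype.sum_prod_type]
        have lhs : g ⬝ᵥ B.mulVec dπ = ∑ s, g s * ∑ a, dπ (s, a) := by
          apply Finset.sum_congr rfl
          intro s _
          rw [h7]
        rw [lhs]
        apply Finset.sum_congr rfl
        intro s _
        have h10 : ∀ a : Fin A, dπ (s, a) * (Φ (s, a) ⬝ᵥ ω)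
            = ((Φ (s, a) ⬝ᵥ ω) * πs s a) * ∑ b, dπ (s, b) := by
          intro a; rw [hdπ s a]; ring
        rw [Finset.sum_congr rfl (fun a _ => h10 a), ← Finset.sum_mul]
        congr 1
        rw [hg]
        apply Finset.sum_congr rfl
        intro a _
        ring
      rw [h4, h5, h6, h8]
    rw [dotProduct_sub, dotProduct_add, dotProduct_smul]
    simp only [smul_eq_mul]
    linarith [key]
  · -- part (ii)
    intro πp hπ0 hπ1 Vp hVp ν
    set ω : Fin D → ℝ := θ + γ • μᵀ.mulVec Vp with hω
    have hg : (fun s => ∑ a, πp s a * (Φ (s, a) ⬝ᵥ ω)) = Vp := by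
      funext s
      rw [hVp s]
      apply Finset.sum_congr rfl
      intro a _
      congr 1
      rw [hω, dotProduct_add, dotProduct_smul, smul_eq_mul]
      congr 1
      congr 1
      rw [Matrix.dotProduct_mulVec]
      apply Finset.sum_congr rfl
      intro s' _
      congr 1
    rw [hL, hg]
    have h3 := hslack πp hπ1 (fun s => ρ s + γ * (μ s ⬝ᵥ ν)) ω
    rw [hg] at h3
    rw [h3, add_zero]
    have hzero : θ + γ • μᵀ.mulVec Vp - ω = 0 := by rw [hω]; abel
    rw [hzero, dotProduct_zero]
    ring
end

section
/- Let Π ∈ ℝ^{SA×S} be a policy matrix, i.e., (Π v)_{(s,a)} = π(a|s)·v(s) for a policy π (so ‖Π‖₂ ≤ 1), let ρ ∈ ℝ^S with ‖ρ‖₂ ≤ 1, let Φ ∈ ℝ^{SA×D} with ‖Φ‖₂ ≤ √𝔐, let γ ∈ (0,1), and let μ₁, μ₂ ∈ ℝ^{S×D} be such that ‖Π μ_i Φ^⊤‖₂ ≤ 1 for i = 1, 2 (which holds when μ_iΦ^⊤ is a transition kernel). Then the matrices I − γ Π μ_i Φ^⊤ are invertible with ‖(I − γ Π μ_i Φ^⊤)^{-1}‖₂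 ≤ 1/(1−γ), and ‖(I − γ Π μ₁ Φ^⊤)^{-1} Π ρ − (I − γ Π μ₂ Φ^⊤)^{-1} Π ρ‖₂ ≤ (3 γ √𝔐/(1−γ)²) · ‖μ₁ − μ₂‖₂. -/
/-!
Since `‖γ Π μᵢ Φᵀ‖ ≤ γ < 1`, the Neumann series inverts `Bᵢ = I − γ Π μᵢ Φᵀ` with
`‖Bᵢ⁻¹‖ ≤ 1 / (1 − γ)`. The resolvent identity `B₁⁻¹ − B₂⁻¹ = B₁⁻¹ (B₂ − B₁) B₂⁻¹`, where
`B₂ − B₁ = γ Π (μ₁ − μ₂) Φᵀ`, then bounds the difference of the occupancy measures by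
`γ √𝔐 ‖μ₁ − μ₂‖ / (1 − γ)²`. Here `‖Π‖ ≤ 1` because `Πᵀ Π` is diagonal with entries
`∑ₐ π(a|s)² ≤ ∑ₐ π(a|s) = 1`.
-/

open Matrix BigOperators

open scoped Matrix.Norms.L2Operator

namespace Matrix

variable {𝕜 : Type*} [RCLike 𝕜] {n : Type*} [Fintype n] [DecidableEq n]

theorem l2_opNorm_one_le : ‖(1 : Matrix n n 𝕜)‖ ≤ 1 := by
  rw [cstar_norm_def, map_one]
  exact ContinuousLinearMap.norm_id_le

theorem isUnit_one_sub_of_l2_opNorm_lt_one {M : Matrix n n 𝕜} (hM : ‖M‖ < 1) :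
    IsUnit (1 - M) :=
  (Units.oneSub M hM).isUnit

theorem l2_opNorm_inv_one_sub_le {M : Matrix n n 𝕜} (hM : ‖M‖ < 1) :
    ‖(1 - M)⁻¹‖ ≤ (1 - ‖M‖)⁻¹ := by
  rw [nonsing_inv_eq_ringInverse, ← geom_series_eq_inverse M hM]
  linarith [tsum_geometric_le_of_norm_lt_one M hM, l2_opNorm_one_le (𝕜 := 𝕜) (n := n)]

theorem l2_opNorm_mul_mul_le {l m p : Type*} [Fintype l] [Fintype m] [Fintype p]
    [DecidableEq m] [DecidableEq p]
    (A : Matrix l m 𝕜) (B : Matrix m p 𝕜) (C : Matrix p n 𝕜) :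
    ‖A * B * C‖ ≤ ‖A‖ * ‖B‖ * ‖C‖ :=
  (l2_opNorm_mul _ _).trans (by gcongr; exact l2_opNorm_mul _ _)

theorem l2_opNorm_inv_sub_inv_le {A B : Matrix n n 𝕜} (h : IsUnit A ↔ IsUnit B) :
    ‖A⁻¹ - B⁻¹‖ ≤ ‖A⁻¹‖ * ‖B - A‖ * ‖B⁻¹‖ := by
  rw [inv_sub_inv h]
  exact l2_opNorm_mul_mul_le _ _ _

theorem l2_opNorm_transpose {m : Type*} [Fintype m] [DecidableEq m] (A : Matrix m n ℝ) :
    ‖Aᵀ‖ = ‖A‖ := by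
  rw [← conjTranspose_eq_transpose_of_trivial, l2_opNorm_conjTranspose]

end Matrix

section Resolvent

variable {n : Type*} [Fintype n] [DecidableEq n] {γ : ℝ} {M M₁ M₂ : Matrix n n ℝ}

theorem norm_smul_le_of_norm_le_one {E : Type*} [SeminormedAddCommGroup E] [NormedSpace ℝ E]
    {x : E} (hγ : 0 ≤ γ) (hx : ‖x‖ ≤ 1) : ‖γ • x‖ ≤ γ := by
  rw [norm_smul, Real.norm_of_nonneg hγ]
  exact mul_le_of_le_one_right hγ hx

theorem isUnit_det_one_sub_smul (hγ0 : 0 ≤ γ) (hγ1 : γ < 1) (hM : ‖M‖ ≤ 1) :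
    IsUnit (1 - γ • M).det :=
  (isUnit_iff_isUnit_det _).mp <|
    isUnit_one_sub_of_l2_opNorm_lt_one ((norm_smul_le_of_norm_le_one hγ0 hM).trans_lt hγ1)

theorem l2_opNorm_inv_one_sub_smul_le (hγ0 : 0 ≤ γ) (hγ1 : γ < 1) (hM : ‖M‖ ≤ 1) :
    ‖(1 - γ • M)⁻¹‖ ≤ 1 / (1 - γ) := by
  have hγM := norm_smul_le_of_norm_le_one hγ0 hM
  calc ‖(1 - γ • M)⁻¹‖ ≤ (1 - ‖γ • M‖)⁻¹ := l2_opNorm_inv_one_sub_le (hγM.trans_lt hγ1)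
    _ ≤ 1 / (1 - γ) := by rw [one_div]; gcongr

theorem l2_opNorm_inv_one_sub_smul_sub_le (hγ0 : 0 ≤ γ) (hγ1 : γ < 1) (hM₁ : ‖M₁‖ ≤ 1)
    (hM₂ : ‖M₂‖ ≤ 1) :
    ‖(1 - γ • M₁)⁻¹ - (1 - γ • M₂)⁻¹‖ ≤ γ * ‖M₁ - M₂‖ / (1 - γ) ^ 2 := by
  have hunit : IsUnit (1 - γ • M₁) ↔ IsUnit (1 - γ • M₂) :=
    iff_of_true ((isUnit_iff_isUnit_det _).mpr (isUnit_det_one_sub_smul hγ0 hγ1 hM₁))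
      ((isUnit_iff_isUnit_det _).mpr (isUnit_det_one_sub_smul hγ0 hγ1 hM₂))
  have hdiff : (1 - γ • M₂) - (1 - γ • M₁) = γ • (M₁ - M₂) := by rw [smul_sub]; abel
  have hγ' : 0 < 1 - γ := sub_pos.mpr hγ1
  calc ‖(1 - γ • M₁)⁻¹ - (1 - γ • M₂)⁻¹‖
      ≤ ‖(1 - γ • M₁)⁻¹‖ * ‖γ • (M₁ - M₂)‖ * ‖(1 - γ • M₂)⁻¹‖ := by
        rw [← hdiff]; exact l2_opNorm_inv_sub_inv_le hunit
    _ ≤ 1 / (1 - γ) * (γ * ‖M₁ - M₂‖) * (1 / (1 - γ)) := by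
        rw [norm_smul, Real.norm_of_nonneg hγ0]
        gcongr
        exacts [l2_opNorm_inv_one_sub_smul_le hγ0 hγ1 hM₁,
          l2_opNorm_inv_one_sub_smul_le hγ0 hγ1 hM₂]
    _ = γ * ‖M₁ - M₂‖ / (1 - γ) ^ 2 := by field_simp

end Resolvent

section Policy

variable {σ α : Type*} [Fintype σ] [Fintype α] [DecidableEq σ]

def policyMatrix (π : σ → α → ℝ) : Matrix (σ × α) σ ℝ :=
  Matrix.of fun sa s => if s = sa.1 then π sa.1 sa.2 else 0

theorem policyMatrix_transpose_mul_self (π : σ → α → ℝ) :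
    (policyMatrix π)ᵀ * policyMatrix π = diagonal fun s => ∑ a, π s a ^ 2 := by
  ext s t
  obtain rfl | hst := eq_or_ne s t
  · simp [policyMatrix, mul_apply, Fintype.sum_prod_type, sq]
  · simp [policyMatrix, mul_apply, Fintype.sum_prod_type, hst]

theorem l2_opNorm_policyMatrix_le_one {π : σ → α → ℝ} (hπ0 : ∀ s a, 0 ≤ π s a)
    (hπ1 : ∀ s, ∑ a, π s a = 1) : ‖policyMatrix π‖ ≤ 1 := by
  have hle : ∀ s a, π s a ≤ 1 := fun s a =>
    hπ1 s ▸ Finset.single_le_sum (fun a _ => hπ0 s a) (Finset.mem_univ a)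
  have hsq : ∀ s, ∑ a, π s a ^ 2 ≤ 1 := fun s =>
    hπ1 s ▸ Finset.sum_le_sum fun a _ => pow_le_of_le_one (hπ0 s a) (hle s a) two_ne_zero
  have hgram : ‖policyMatrix π‖ * ‖policyMatrix π‖ ≤ 1 := by
    rw [← l2_opNorm_conjTranspose_mul_self, conjTranspose_eq_transpose_of_trivial,
      policyMatrix_transpose_mul_self, l2_opNorm_diagonal]
    refine pi_norm_le_iff_of_nonneg zero_le_one |>.mpr fun s => ?_
    rw [Real.norm_of_nonneg (Finset.sum_nonneg fun a _ => sq_nonneg _)]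
    exact hsq s
  nlinarith [norm_nonneg (policyMatrix π)]

end Policy

theorem specNorm_eq_l2_opNorm {m n : Type*} [Fintype m] [Fintype n] [DecidableEq n]
    (M : Matrix m n ℝ) : specNorm M = ‖M‖ := rfl

theorem e2norm_eq_norm {n : Type*} [Fintype n] (x : n → ℝ) :
    e2norm x = ‖(EuclideanSpace.equiv n ℝ).symm x‖ := by
  simp [e2norm, EuclideanSpace.norm_eq, sq_abs]

theorem e2norm_mulVec_le {m n : Type*} [Fintype m] [Fintype n] [DecidableEq n]
    (M : Matrix m n ℝ) (x : n → ℝ) : e2norm (M *ᵥ x) ≤ ‖M‖ * e2norm x := by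
  rw [e2norm_eq_norm, e2norm_eq_norm]
  exact l2_opNorm_mulVec M _

/-- perturbation bound for occupancy measures
`(I − γΠμΦᵀ)⁻¹Πρ` with respect to the transition parameter `μ`. -/
theorem occupancy_matrix_perturbation
    (S A D : ℕ)
    (γ 𝔐 : ℝ) (hγ0 : 0 < γ) (hγ1 : γ < 1)
    (π : Fin S → Fin A → ℝ)
    (hπ0 : ∀ s a, 0 ≤ π s a) (hπ1 : ∀ s, ∑ a, π s a = 1)
    (PiM : Matrix (Fin S × Fin A) (Fin S) ℝ)
    (hPiM : ∀ sa s', PiM sa s' = if s' = sa.1 then π sa.1 sa.2 else 0)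
    (ρ : Fin S → ℝ) (hρ : e2norm ρ ≤ 1)
    (Φ : Matrix (Fin S × Fin A) (Fin D) ℝ) (hΦ : specNorm Φ ≤ Real.sqrt 𝔐)
    (μ₁ μ₂ : Matrix (Fin S) (Fin D) ℝ)
    (h₁ : specNorm (PiM * μ₁ * Φᵀ) ≤ 1) (h₂ : specNorm (PiM * μ₂ * Φᵀ) ≤ 1) :
    IsUnit ((1 : Matrix (Fin S × Fin A) (Fin S × Fin A) ℝ)
        - γ • (PiM * μ₁ * Φᵀ)).det
    ∧ IsUnit ((1 : Matrix (Fin S × Fin A) (Fin S × Fin A) ℝ)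
        - γ • (PiM * μ₂ * Φᵀ)).det
    ∧ specNorm ((1 : Matrix (Fin S × Fin A) (Fin S × Fin A) ℝ)
        - γ • (PiM * μ₁ * Φᵀ))⁻¹ ≤ 1 / (1 - γ)
    ∧ specNorm ((1 : Matrix (Fin S × Fin A) (Fin S × Fin A) ℝ)
        - γ • (PiM * μ₂ * Φᵀ))⁻¹ ≤ 1 / (1 - γ)
    ∧ e2norm (((1 : Matrix (Fin S × Fin A) (Fin S × Fin A) ℝ)
          - γ • (PiM * μ₁ * Φᵀ))⁻¹.mulVec (PiM.mulVec ρ)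
        - ((1 : Matrix (Fin S × Fin A) (Fin S × Fin A) ℝ)
          - γ • (PiM * μ₂ * Φᵀ))⁻¹.mulVec (PiM.mulVec ρ))
      ≤ 3 * γ * Real.sqrt 𝔐 / (1 - γ)^2 * specNorm (μ₁ - μ₂) := by
  have hP : ‖PiM‖ ≤ 1 := Matrix.ext hPiM ▸ l2_opNorm_policyMatrix_le_one hπ0 hπ1
  simp only [specNorm_eq_l2_opNorm] at hΦ h₁ h₂ ⊢
  refine ⟨isUnit_det_one_sub_smul hγ0.le hγ1 h₁, isUnit_det_one_sub_smul hγ0.le hγ1 h₂,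
    l2_opNorm_inv_one_sub_smul_le hγ0.le hγ1 h₁, l2_opNorm_inv_one_sub_smul_le hγ0.le hγ1 h₂, ?_⟩
  have hPρ : e2norm (PiM *ᵥ ρ) ≤ 1 :=
    (e2norm_mulVec_le _ _).trans (mul_le_one₀ hP (Real.sqrt_nonneg _) hρ)
  have hM : ‖PiM * μ₁ * Φᵀ - PiM * μ₂ * Φᵀ‖ ≤ √𝔐 * ‖μ₁ - μ₂‖ := by
    rw [← Matrix.sub_mul, ← Matrix.mul_sub]
    calc _ ≤ ‖PiM‖ * ‖μ₁ - μ₂‖ * ‖Φᵀ‖ := l2_opNorm_mul_mul_le _ _ _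
      _ ≤ 1 * ‖μ₁ - μ₂‖ * √𝔐 := by rw [l2_opNorm_transpose]; gcongr
      _ = √𝔐 * ‖μ₁ - μ₂‖ := by ring
  rw [← sub_mulVec]
  calc _ ≤ ‖_ - _‖ * e2norm (PiM *ᵥ ρ) := e2norm_mulVec_le _ _
    _ ≤ γ * (√𝔐 * ‖μ₁ - μ₂‖) / (1 - γ) ^ 2 * 1 :=
        mul_le_mul ((l2_opNorm_inv_one_sub_smul_sub_le hγ0.le hγ1 h₁ h₂).trans (by gcongr)) hPρ
          (Real.sqrt_nonneg _) (by positivity)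
    _ ≤ 3 * γ * √𝔐 / (1 - γ) ^ 2 * ‖μ₁ - μ₂‖ := by
        rw [mul_one, ← mul_assoc, mul_div_right_comm]
        gcongr
        linarith
end

section
/- Define the Lagrangian L_λ(d, ν; g, ω) = ν^⊤(θ + γ μ^⊤ g − ω) − (λ/2) ν^⊤ν + ⟨g, ρ⟩ + ⟨d, Φω − B^⊤g⟩. Let d̃ ∈ Δ(𝒮×𝒜) be a sampling distribution such that Σ := Σ_{s,a} d̃(s,a) φ(s,a)φ(s,a)^⊤ is invertible, and suppose the reward and transitions are linear: r(s,a) = φ(s,a)^⊤θ and P(s'|s,a) = φ(s,a)^⊤μ(s') with P(·|s,a) ∈ Δ(𝒮). Then for all d ∈ ℝ^{SA}, ν, ω ∈ ℝ^D, g ∈ ℝ^S: Σ_{s,a,s'} d̃(s,a) P(s'|s,a) · ν^⊤Σ^{-1}φ(s,a)·(r(s,a) + γ·g(s') − φ(s,a)^⊤ω) − (λ/2) ν^⊤ν + Σ_{s⁰} ρ(s⁰) g(s⁰) + ⟨d, Φω − B^⊤g⟩ = L_λ(d, ν; g, ω); that is, the empirical Lagrangian built from samples (s⁰, s, a, r,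 s') with s⁰ ∼ ρ, (s,a) ∼ d̃, s' ∼ P(·|s,a) is an unbiased estimator of L_λ. -/
open Matrix BigOperators

/-- the empirical Lagrangian is an unbiased estimator of the
true Lagrangian in a linear MDP. -/
theorem empirical_lagrangian_unbiased
    (S A D : ℕ)
    (γ lam : ℝ) (hγ0 : 0 < γ) (hγ1 : γ < 1) (hlam : 0 < lam)
    (ρ : Fin S → ℝ) (hρ0 : ∀ s, 0 ≤ ρ s) (hρ1 : ∑ s, ρ s = 1)
    (θ : Fin D → ℝ) (μ : Matrix (Fin S) (Fin D) ℝ)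
    (Φ : Matrix (Fin S × Fin A) (Fin D) ℝ)
    (B : Matrix (Fin S) (Fin S × Fin A) ℝ)
    (hB : ∀ s sa, B s sa = if sa.1 = s then 1 else 0)
    -- sampling distribution over state–action pairs
    (dt : Fin S × Fin A → ℝ)
    (hdt0 : ∀ sa, 0 ≤ dt sa) (hdt1 : ∑ sa, dt sa = 1)
    -- linear reward and transitions
    (r : Fin S × Fin A → ℝ) (hr : ∀ sa, r sa = Φ sa ⬝ᵥ θ)
    (P : Fin S × Fin A → Fin S → ℝ) (hPdef : ∀ sa s', P sa s' = Φ sa ⬝ᵥ μ s')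
    (hP0 : ∀ sa s', 0 ≤ P sa s') (hP1 : ∀ sa, ∑ s', P sa s' = 1)
    -- covariance matrix of the features under the sampling distribution
    (Sig : Matrix (Fin D) (Fin D) ℝ)
    (hSig : Sig = ∑ sa, dt sa • Matrix.vecMulVec (Φ sa) (Φ sa))
    (hSiginv : IsUnit Sig.det)
    -- the true Lagrangian
    (L : (Fin S × Fin A → ℝ) → (Fin D → ℝ) → (Fin S → ℝ) → (Fin D → ℝ) → ℝ)
    (hL : ∀ d₀ ν₀ g₀ ω₀, L d₀ ν₀ g₀ ω₀ =
      ν₀ ⬝ᵥ (θ + γ • μᵀ.mulVec g₀ - ω₀) - lam / 2 * (ν₀ ⬝ᵥ ν₀)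
        + g₀ ⬝ᵥ ρ + d₀ ⬝ᵥ (Φ.mulVec ω₀ - Bᵀ.mulVec g₀)) :
    ∀ (d : Fin S × Fin A → ℝ) (ν ω : Fin D → ℝ) (g : Fin S → ℝ),
      (∑ sa, ∑ s', dt sa * P sa s' *
          ((ν ⬝ᵥ Sig⁻¹.mulVec (Φ sa)) * (r sa + γ * g s' - Φ sa ⬝ᵥ ω)))
        - lam / 2 * (ν ⬝ᵥ ν)
        + (∑ s0, ρ s0 * g s0)
        + d ⬝ᵥ (Φ.mulVec ω - Bᵀ.mulVec g)
      = L d ν g ω := by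

  intro d ν ω g
  rw [hL]
  set x : Fin D → ℝ := θ + γ • μᵀ.mulVec g - ω with hx
  have hrho : (∑ s0, ρ s0 * g s0) = g ⬝ᵥ ρ := by
    simp [dotProduct, mul_comm]
  have hPg : ∀ sa, ∑ s', P sa s' * g s' = Φ sa ⬝ᵥ μᵀ.mulVec g := by
    intro sa
    rw [dotProduct_mulVec]
    simp only [dotProduct]
    refine Finset.sum_congr rfl fun s' _ => ?_
    rw [hPdef]
    simp [vecMul, dotProduct, transpose_apply]
  have hinner : ∀ sa, ∑ s', P sa s' * (r sa + γ * g s' - Φ sa ⬝ᵥ ω)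
      = Φ sa ⬝ᵥ x := by
    intro sa
    have : ∑ s', P sa s' * (r sa + γ * g s' - Φ sa ⬝ᵥ ω)
        = (∑ s', P sa s') * (r sa - Φ sa ⬝ᵥ ω) + γ * ∑ s', P sa s' * g s' := by
      rw [Finset.sum_mul, Finset.mul_sum, ← Finset.sum_add_distrib]
      refine Finset.sum_congr rfl fun s' _ => ?_; ring
    rw [this, hP1, hPg, hr, hx]
    simp [dotProduct_sub, dotProduct_add, dotProduct_smul, smul_eq_mul]
    ring
  have hsigx : Sig.mulVec x = ∑ sa, (dt sa * (Φ sa ⬝ᵥ x)) • Φ sa := by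
    funext i
    rw [hSig]
    simp only [mulVec, dotProduct, Matrix.sum_apply, Matrix.smul_apply,
      vecMulVec_apply, smul_eq_mul, Finset.sum_apply, Pi.smul_apply,
      Finset.sum_mul]
    rw [Finset.sum_comm]
    refine Finset.sum_congr rfl fun sa _ => ?_
    rw [Finset.mul_sum, Finset.sum_mul]
    refine Finset.sum_congr rfl fun j _ => ?_
    ring
  have hmain : (∑ sa, ∑ s', dt sa * P sa s' *
      ((ν ⬝ᵥ Sig⁻¹.mulVec (Φ sa)) * (r sa + γ * g s' - Φ sa ⬝ᵥ ω))) = ν ⬝ᵥ x := by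
    have h1 : (∑ sa, ∑ s', dt sa * P sa s' *
        ((ν ⬝ᵥ Sig⁻¹.mulVec (Φ sa)) * (r sa + γ * g s' - Φ sa ⬝ᵥ ω)))
        = ∑ sa, (dt sa * (Φ sa ⬝ᵥ x)) * (ν ⬝ᵥ Sig⁻¹.mulVec (Φ sa)) := by
      refine Finset.sum_congr rfl fun sa _ => ?_
      rw [← hinner sa, Finset.mul_sum, Finset.sum_mul]
      refine Finset.sum_congr rfl fun s' _ => ?_
      ring
    have hlin : Sig⁻¹.mulVec (Sig.mulVec x)
        = ∑ sa, (dt sa * (Φ sa ⬝ᵥ x)) • Sig⁻¹.mulVec (Φ sa) := by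
      rw [hsigx, ← Matrix.mulVecLin_apply, map_sum]
      simp [Matrix.mulVecLin_apply]
    have h3 : ν ⬝ᵥ Sig⁻¹.mulVec (Sig.mulVec x)
        = ∑ sa, (dt sa * (Φ sa ⬝ᵥ x)) * (ν ⬝ᵥ Sig⁻¹.mulVec (Φ sa)) := by
      rw [hlin]
      simp only [dotProduct, Finset.sum_apply, Pi.smul_apply, smul_eq_mul,
        Finset.mul_sum]
      rw [Finset.sum_comm]
      refine Finset.sum_congr rfl fun sa _ => Finset.sum_congr rfl fun i _ => by ring
    rw [h1, ← h3, Matrix.mulVec_mulVec, Matrix.nonsing_inv_mul _ hSiginv,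
      Matrix.one_mulVec]
  rw [hmain, hrho]
end

section
/- Let 𝒮 and 𝒜 be finite sets and γ ∈ (0,1). Let (r₁, P₁) and (r₂, P₂) be two Markov decision processes on 𝒮 × 𝒜 with rewards bounded by |r_i(s,a)| ≤ R, reward gap |r₁(s,a) − r₂(s,a)| ≤ ε_r for all (s,a), and transition gap Σ_{s'} |P₁(s'|s,a) − P₂(s'|s,a)| ≤ ε_P for all (s,a). Fix a policy π and let Q₁^π, Q₂^π be its state–action value functions in the two models, i.e., the (unique bounded) solutions of Q_i^π(s,a) = r_i(s,a) + γ Σ_{s'} P_i(s'|s,a) Σ_b π(b|s') Q_i^π(s',b). Then for every (s,a): |Q₁^π(s,a) − Q₂^π(s,a)| ≤ ε_r/(1−γ) + R·γ·ε_P/(1−γ)². -/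
/-! Write `T_{r,P} Q (s,a) = r(s,a) + γ ∑_{s'} P(s'|s,a) ∑_b π(b|s') Q(s',b)`.
This is affine in `Q` and linear in `(r, P)`, so
`Q₁ - Q₂ = T₁Q₁ - T₂Q₂ = T_{0,P₁}(Q₁ - Q₂) + T_{r₁-r₂, P₁-P₂} Q₂`.
In the sup norm, `|T_{r,P} Q| ≤ |r| + γ (∑ |P|) ‖Q‖`, which gives `‖Q₂‖ ≤ R / (1 - γ)`
and `‖Q₁ - Q₂‖ ≤ γ ‖Q₁ - Q₂‖ + εr + γ εP ‖Q₂‖`. -/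

open Finset

section WeightedSum

variable {ι : Type*} [Fintype ι]

theorem abs_sum_mul_le_of_abs_le {w f : ι → ℝ} {C : ℝ} (hf : ∀ i, |f i| ≤ C) :
    |∑ i, w i * f i| ≤ (∑ i, |w i|) * C :=
  calc |∑ i, w i * f i| ≤ ∑ i, |w i| * |f i| := by
        simpa only [abs_mul] using abs_sum_le_sum_abs (fun i => w i * f i) univ
    _ ≤ ∑ i, |w i| * C := by gcongr with i; exact hf i
    _ = (∑ i, |w i|) * C := (sum_mul _ _ _).symm

theorem sum_abs_eq_one {w : ι → ℝ} (hw0 : ∀ i, 0 ≤ w i) (hw1 : ∑ i, w i = 1) :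
    ∑ i, |w i| = 1 := by
  simpa only [abs_of_nonneg (hw0 _)] using hw1

theorem abs_sum_mul_le_of_sum_eq_one {w f : ι → ℝ} {C : ℝ} (hw0 : ∀ i, 0 ≤ w i)
    (hw1 : ∑ i, w i = 1) (hf : ∀ i, |f i| ≤ C) : |∑ i, w i * f i| ≤ C := by
  simpa only [sum_abs_eq_one hw0 hw1, one_mul] using abs_sum_mul_le_of_abs_le (w := w) hf

end WeightedSum

section PolicyEvaluation

variable {S A : Type*} [Fintype S] [Fintype A]

theorem abs_apply_apply_le_norm (Q : S → A → ℝ) (s : S) (a : A) : |Q s a| ≤ ‖Q‖ :=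
  calc |Q s a| = ‖Q s a‖ := (Real.norm_eq_abs _).symm
    _ ≤ ‖Q s‖ := norm_le_pi_norm (Q s) a
    _ ≤ ‖Q‖ := norm_le_pi_norm Q s

theorem norm_le_div_one_sub_of_abs_le [Nonempty S] [Nonempty A] {Q : S → A → ℝ} {c γ : ℝ}
    (hγ : γ < 1) (h : ∀ s a, |Q s a| ≤ c + γ * ‖Q‖) : ‖Q‖ ≤ c / (1 - γ) := by
  have hQ : ‖Q‖ ≤ c + γ * ‖Q‖ := (pi_norm_le_iff_of_nonempty _).2 fun s =>
    (pi_norm_le_iff_of_nonempty _).2 fun a => (Real.norm_eq_abs _).trans_le (h s a)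
  rw [le_div_iff₀ (sub_pos.2 hγ)]
  linarith

def bellmanEval (γ : ℝ) (r : S → A → ℝ) (P : S → A → S → ℝ) (π Q : S → A → ℝ) :
    S → A → ℝ :=
  fun s a => r s a + γ * ∑ s', P s a s' * ∑ b, π s' b * Q s' b

theorem bellmanEval_sub_bellmanEval (γ : ℝ) (r r' : S → A → ℝ) (P P' : S → A → S → ℝ)
    (π Q Q' : S → A → ℝ) :
    bellmanEval γ r P π Q - bellmanEval γ r' P' π Q' =
      bellmanEval γ 0 P π (Q - Q') + bellmanEval γ (r - r') (P - P') π Q' := by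
  funext s a
  simp only [bellmanEval, Pi.sub_apply, Pi.add_apply, Pi.zero_apply, mul_sub, sub_mul,
    sum_sub_distrib]
  ring

theorem abs_bellmanEval_le {π : S → A → ℝ} (hπ0 : ∀ s a, 0 ≤ π s a)
    (hπ1 : ∀ s, ∑ a, π s a = 1) (γ : ℝ) (r : S → A → ℝ) (P : S → A → S → ℝ)
    (Q : S → A → ℝ) (s : S) (a : A) :
    |bellmanEval γ r P π Q s a| ≤ |r s a| + |γ| * ((∑ s', |P s a s'|) * ‖Q‖) := by
  have hV : ∀ s', |∑ b, π s' b * Q s' b| ≤ ‖Q‖ := fun s' =>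
    abs_sum_mul_le_of_sum_eq_one (hπ0 s') (hπ1 s') (abs_apply_apply_le_norm Q s')
  calc |bellmanEval γ r P π Q s a|
      ≤ |r s a| + |γ| * |∑ s', P s a s' * ∑ b, π s' b * Q s' b| :=
        (abs_add_le _ _).trans_eq (by rw [abs_mul])
    _ ≤ |r s a| + |γ| * ((∑ s', |P s a s'|) * ‖Q‖) := by
        gcongr
        exact abs_sum_mul_le_of_abs_le hV

theorem abs_sub_apply_le_of_isFixedPt {π : S → A → ℝ} (hπ0 : ∀ s a, 0 ≤ π s a)
    (hπ1 : ∀ s, ∑ a, π s a = 1) {γ : ℝ} {r₁ r₂ Q₁ Q₂ : S → A → ℝ}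
    {P₁ P₂ : S → A → S → ℝ}
    (h₁ : Function.IsFixedPt (bellmanEval γ r₁ P₁ π) Q₁)
    (h₂ : Function.IsFixedPt (bellmanEval γ r₂ P₂ π) Q₂) (s : S) (a : A) :
    |Q₁ s a - Q₂ s a| ≤ |r₁ s a - r₂ s a| + |γ| * ((∑ s', |P₁ s a s'|) * ‖Q₁ - Q₂‖)
      + |γ| * ((∑ s', |P₁ s a s' - P₂ s a s'|) * ‖Q₂‖) := by
  have hsplit := congrFun₂ (bellmanEval_sub_bellmanEval γ r₁ r₂ P₁ P₂ π Q₁ Q₂) s a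
  simp only [h₁.eq, h₂.eq, Pi.sub_apply, Pi.add_apply] at hsplit
  rw [hsplit]
  refine (abs_add_le _ _).trans ?_
  have h0 := abs_bellmanEval_le hπ0 hπ1 γ 0 P₁ (Q₁ - Q₂) s a
  have hδ := abs_bellmanEval_le hπ0 hπ1 γ (r₁ - r₂) (P₁ - P₂) Q₂ s a
  simp only [Pi.zero_apply, abs_zero, zero_add, Pi.sub_apply] at h0 hδ
  linarith

end PolicyEvaluation

theorem policy_Q_perturbation_general
    {S A : Type*} [Fintype S] [Fintype A] [Nonempty S] [Nonempty A]
    (γ : ℝ) (hγ0 : 0 < γ) (hγ1 : γ < 1)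
    (r₁ r₂ : S → A → ℝ) (P₁ P₂ : S → A → S → ℝ)
    (R εr εP : ℝ)
    (hP₁0 : ∀ s a s', 0 ≤ P₁ s a s') (hP₁1 : ∀ s a, ∑ s', P₁ s a s' = 1)
    (hP₂0 : ∀ s a s', 0 ≤ P₂ s a s') (hP₂1 : ∀ s a, ∑ s', P₂ s a s' = 1)
    (hR₂ : ∀ s a, |r₂ s a| ≤ R)
    (hr : ∀ s a, |r₁ s a - r₂ s a| ≤ εr)
    (hP : ∀ s a, ∑ s', |P₁ s a s' - P₂ s a s'| ≤ εP)
    (π : S → A → ℝ)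
    (hπ0 : ∀ s a, 0 ≤ π s a) (hπ1 : ∀ s, ∑ a, π s a = 1)
    (Q₁ Q₂ : S → A → ℝ)
    (hQ₁ : ∀ s a, Q₁ s a = r₁ s a + γ * ∑ s', P₁ s a s' * ∑ b, π s' b * Q₁ s' b)
    (hQ₂ : ∀ s a, Q₂ s a = r₂ s a + γ * ∑ s', P₂ s a s' * ∑ b, π s' b * Q₂ s' b) :
    ∀ s a, |Q₁ s a - Q₂ s a| ≤ εr / (1 - γ) + R * γ * εP / (1 - γ)^2 := by
  have hQ₁T : Function.IsFixedPt (bellmanEval γ r₁ P₁ π) Q₁ :=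
    funext₂ fun s a => (hQ₁ s a).symm
  have hQ₂T : Function.IsFixedPt (bellmanEval γ r₂ P₂ π) Q₂ :=
    funext₂ fun s a => (hQ₂ s a).symm
  have hQ₂_le : ‖Q₂‖ ≤ R / (1 - γ) := norm_le_div_one_sub_of_abs_le hγ1 fun s a => by
    have h := abs_bellmanEval_le hπ0 hπ1 γ r₂ P₂ Q₂ s a
    rw [hQ₂T.eq, abs_of_pos hγ0, sum_abs_eq_one (hP₂0 s a) (hP₂1 s a), one_mul] at h
    linarith [hR₂ s a]
  have hdiff_le : ‖Q₁ - Q₂‖ ≤ (εr + γ * (εP * (R / (1 - γ)))) / (1 - γ) := by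
    refine norm_le_div_one_sub_of_abs_le hγ1 fun s a => ?_
    have h := abs_sub_apply_le_of_isFixedPt hπ0 hπ1 hQ₁T hQ₂T s a
    rw [abs_of_pos hγ0, sum_abs_eq_one (hP₁0 s a) (hP₁1 s a), one_mul] at h
    have hεP : 0 ≤ εP := (sum_nonneg fun _ _ => abs_nonneg _).trans (hP s a)
    have htransition :
        γ * ((∑ s', |P₁ s a s' - P₂ s a s'|) * ‖Q₂‖) ≤ γ * (εP * (R / (1 - γ))) := by
      gcongr
      exact hP s a
    simp only [Pi.sub_apply]
    linarith [hr s a]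
  intro s a
  calc |Q₁ s a - Q₂ s a| ≤ ‖Q₁ - Q₂‖ := abs_apply_apply_le_norm (Q₁ - Q₂) s a
    _ ≤ (εr + γ * (εP * (R / (1 - γ)))) / (1 - γ) := hdiff_le
    _ = εr / (1 - γ) + R * γ * εP / (1 - γ)^2 := by
      field_simp [(sub_pos.2 hγ1).ne']

/-- simulation lemma for the Q-functions of a fixed policy in
two nearby MDPs. -/
theorem policy_Q_perturbation
    {S A : Type*} [Fintype S] [Fintype A] [Nonempty S] [Nonempty A]
    (γ : ℝ) (hγ0 : 0 < γ) (hγ1 : γ < 1)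
    (r₁ r₂ : S → A → ℝ) (P₁ P₂ : S → A → S → ℝ)
    (R εr εP : ℝ)
    (hP₁0 : ∀ s a s', 0 ≤ P₁ s a s') (hP₁1 : ∀ s a, ∑ s', P₁ s a s' = 1)
    (hP₂0 : ∀ s a s', 0 ≤ P₂ s a s') (hP₂1 : ∀ s a, ∑ s', P₂ s a s' = 1)
    (hR₁ : ∀ s a, |r₁ s a| ≤ R) (hR₂ : ∀ s a, |r₂ s a| ≤ R)
    (hr : ∀ s a, |r₁ s a - r₂ s a| ≤ εr)
    (hP : ∀ s a, ∑ s', |P₁ s a s' - P₂ s a s'| ≤ εP)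
    (π : S → A → ℝ)
    (hπ0 : ∀ s a, 0 ≤ π s a) (hπ1 : ∀ s, ∑ a, π s a = 1)
    (Q₁ Q₂ : S → A → ℝ)
    (hQ₁ : ∀ s a, Q₁ s a = r₁ s a + γ * ∑ s', P₁ s a s' * ∑ b, π s' b * Q₁ s' b)
    (hQ₂ : ∀ s a, Q₂ s a = r₂ s a + γ * ∑ s', P₂ s a s' * ∑ b, π s' b * Q₂ s' b) :
    ∀ s a, |Q₁ s a - Q₂ s a| ≤ εr / (1 - γ) + R * γ * εP / (1 - γ)^2 :=
  policy_Q_perturbation_general γ hγ0 hγ1 r₁ r₂ P₁ P₂ R εr εP hP₁0 hP₁1 hP₂0 hP₂1 hR₂ hr hP π hπ0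
    hπ1 Q₁ Q₂ hQ₁ hQ₂
end
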